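/- arXiv:1803.01031 — 6 statements merged into one kernel-verified Lean document; each statement's English description precedes it below -/
import Mathlib

section
/- The sequence {pa(n)}_{n≥1} is strictly increasing: for every positive integer n, pa(n) < pa(n+1). -/
/-- A partition is (unlimited) parity alternating if any two consecutive distinct part
sizes have opposite parity. -/
def ParityAlternating {n : ℕ} (p : n.Partition) : Prop :=
  ∀ a ∈ p.parts, ∀ b ∈ p.parts, a < b →
    (∀ c ∈ p.parts, ¬(a < c ∧ c < b)) → (Odd a ↔ Even b)

/-- The number of unlimited parity alternating partitions of `n`. -/
noncomputable def pa (n : ℕ) : ℕ := Nat.card {p : n.Partition // ParityAlternating p}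

/-!
Map each parity alternating partition of `n` to one of `n + 1`. If its least part is `1` or
even, add a part `1`. Otherwise every part is at least `3` and the least one is odd; if the
largest part `t` is repeated or is the only part size, raise one copy of it to `t + 1`, and if
not, replace it by the second largest part `w` together with `(t + 1 - w) / 2` parts `2` (an
integer, since adjacent part sizes `w < t` have opposite parity). The three cases are told apart
by whether `1` or `2` occurs, and each is easily undone, so the map is injective. It misses the
partition of `n + 1 ≥ 2` into parts `2` and at most one `3`: the image of the last case contains
its largest part `w ≥ 3` twice.
-/

namespace Multiset

lemma sup_mem_of_ne_zero {s : Multiset ℕ} (hs : s ≠ 0) : s.sup ∈ s := by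
  obtain ⟨y, hy, hmax⟩ := s.exists_max_image id hs
  rwa [le_antisymm (sup_le.2 hmax) (le_sup hy)]

lemma sup_cons_of_forall_le {s : Multiset ℕ} {a : ℕ} (h : ∀ x ∈ s, x ≤ a) :
    (a ::ₘ s).sup = a := by
  rw [sup_cons, sup_eq_left.2 (sup_le.2 h)]

def IsParityAlternating (s : Multiset ℕ) : Prop :=
  ∀ a ∈ s, ∀ b ∈ s, a < b → (∀ c ∈ s, ¬(a < c ∧ c < b)) → (Odd a ↔ Even b)

namespace IsParityAlternating

variable {s : Multiset ℕ} {a : ℕ}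

lemma of_cons (h : (a ::ₘ s).IsParityAlternating) (hge : ∀ x ∈ s, x ≤ a) :
    s.IsParityAlternating := by
  intro x hx y hy hxy hbtw
  refine h x (mem_cons_of_mem hx) y (mem_cons_of_mem hy) hxy fun c hc ⟨hxc, hcy⟩ => ?_
  rcases mem_cons.1 hc with rfl | hc
  · exact absurd (hge y hy) hcy.not_ge
  · exact hbtw c hc ⟨hxc, hcy⟩

lemma cons_of_forall_le (hs : s.IsParityAlternating) (hle : ∀ x ∈ s, a ≤ x)
    (hmin : ∀ b ∈ s, (∀ x ∈ s, b ≤ x) → a < b → (Odd a ↔ Even b)) :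
    (a ::ₘ s).IsParityAlternating := by
  intro x hx y hy hxy hbtw
  have hbtw' : ∀ c ∈ s, ¬(x < c ∧ c < y) := fun c hc => hbtw c (mem_cons_of_mem hc)
  rcases mem_cons.1 hy with rfl | hys
  · rcases mem_cons.1 hx with rfl | hxs
    · exact absurd hxy (lt_irrefl _)
    · exact absurd (hle x hxs) hxy.not_ge
  rcases mem_cons.1 hx with rfl | hxs
  · by_cases hxs : x ∈ s
    · exact hs x hxs y hys hxy hbtw'
    refine hmin y hys (fun z hz => ?_) hxy
    have hzx : z ≠ x := fun h => hxs (h ▸ hz)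
    have := hle z hz
    have := hbtw' z hz
    omega
  · exact hs x hxs y hys hxy hbtw'

lemma cons_of_forall_ge (hs : s.IsParityAlternating) (hge : ∀ x ∈ s, x ≤ a)
    (hmax : ∀ b ∈ s, (∀ x ∈ s, x ≤ b) → b < a → (Odd b ↔ Even a)) :
    (a ::ₘ s).IsParityAlternating := by
  intro x hx y hy hxy hbtw
  have hbtw' : ∀ c ∈ s, ¬(x < c ∧ c < y) := fun c hc => hbtw c (mem_cons_of_mem hc)
  rcases mem_cons.1 hx with rfl | hxs
  · rcases mem_cons.1 hy with rfl | hys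
    · exact absurd hxy (lt_irrefl _)
    · exact absurd (hge y hys) hxy.not_ge
  rcases mem_cons.1 hy with rfl | hys
  · by_cases hys : y ∈ s
    · exact hs x hxs y hys hxy hbtw'
    refine hmax x hxs (fun z hz => ?_) hxy
    have hzy : z ≠ y := fun h => hys (h ▸ hz)
    have := hge z hz
    have := hbtw' z hz
    omega
  · exact hs x hxs y hys hxy hbtw'

lemma replicate_add (hs : s.IsParityAlternating) (hle : ∀ x ∈ s, a ≤ x)
    (hmin : ∀ b ∈ s, (∀ x ∈ s, b ≤ x) → a < b → (Odd a ↔ Even b)) (d : ℕ) :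
    (replicate d a + s).IsParityAlternating := by
  induction d with
  | zero => simpa using hs
  | succ d ih =>
    rw [replicate_succ, cons_add]
    refine ih.cons_of_forall_le (fun x hx => ?_) fun b hb hbmin hab => ?_
    · rcases mem_add.1 hx with hx | hx
      · exact (eq_of_mem_replicate hx).ge
      · exact hle x hx
    · rcases mem_add.1 hb with hb | hb
      · exact absurd (eq_of_mem_replicate hb) hab.ne'
      · exact hmin b hb (fun x hx => hbmin x (mem_add.2 (.inr hx))) hab

/-- The second largest part `e.sup` is adjacent to `t`, so `t + 1 - e.sup` is even. -/
lemma second_largest_spec {t : ℕ} {e : Multiset ℕ} (hs : (t ::ₘ e).IsParityAlternating)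
    (hle : ∀ x ∈ e, x ≤ t) (he : e ≠ 0) (ht : t ∉ e) :
    e.sup ∈ e ∧ e.sup < t ∧ e.sup + 2 * ((t + 1 - e.sup) / 2) = t + 1 := by
  have hw := sup_mem_of_ne_zero he
  have hwt : e.sup < t := (hle _ hw).lt_of_ne fun h => ht (h ▸ hw)
  have hpar : Odd e.sup ↔ Even t := by
    refine hs _ (mem_cons_of_mem hw) t (mem_cons_self t e) hwt fun c hc ⟨hwc, hct⟩ => ?_
    rcases mem_cons.1 hc with rfl | hc
    · exact lt_irrefl _ hct
    · exact (le_sup hc).not_gt hwc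
  rw [Nat.odd_iff, Nat.even_iff] at hpar
  exact ⟨hw, hwt, by omega⟩

end IsParityAlternating

def twosAndThree (N : ℕ) : Multiset ℕ :=
  replicate (N % 2) 3 + replicate (N / 2 - N % 2) 2

lemma eq_three_or_eq_two_of_mem_twosAndThree {N x : ℕ} (hx : x ∈ twosAndThree N) :
    x = 3 ∨ x = 2 :=
  (mem_add.1 hx).imp eq_of_mem_replicate eq_of_mem_replicate

lemma count_three_twosAndThree_le_one (N : ℕ) : count 3 (twosAndThree N) ≤ 1 := by
  simp [twosAndThree, count_replicate]
  omega

lemma sum_twosAndThree {N : ℕ} (hN : 2 ≤ N) : (twosAndThree N).sum = N := by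
  simp only [twosAndThree, sum_add, sum_replicate, smul_eq_mul]
  omega

lemma isParityAlternating_twosAndThree (N : ℕ) : (twosAndThree N).IsParityAlternating := by
  intro a ha b hb hab _
  rcases eq_three_or_eq_two_of_mem_twosAndThree ha with rfl | rfl <;>
    rcases eq_three_or_eq_two_of_mem_twosAndThree hb with rfl | rfl
  all_goals first | omega | decide

def raiseLargest (t : ℕ) (e : Multiset ℕ) : Multiset ℕ :=
  if e = 0 ∨ t ∈ e then (t + 1) ::ₘ e
  else e.sup ::ₘ (replicate ((t + 1 - e.sup) / 2) 2 + e)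

def lowerLargest (q : Multiset ℕ) : Multiset ℕ :=
  if 2 ∈ q then (q.sup + 2 * q.count 2 - 1) ::ₘ (q.erase q.sup).filter (· ≠ 2)
  else (q.sup - 1) ::ₘ q.erase q.sup

section raiseLargest

variable {t : ℕ} {e : Multiset ℕ}

lemma sum_raiseLargest (hs : (t ::ₘ e).IsParityAlternating) (hle : ∀ x ∈ e, x ≤ t) :
    (raiseLargest t e).sum = (t ::ₘ e).sum + 1 := by
  unfold raiseLargest
  split_ifs with hB
  · simp only [sum_cons]
    omega
  · push Not at hB
    obtain ⟨-, -, hsplit⟩ := hs.second_largest_spec hle hB.1 hB.2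
    simp only [sum_cons, sum_add, sum_replicate, smul_eq_mul]
    omega

lemma two_le_of_mem_raiseLargest (h3 : ∀ x ∈ t ::ₘ e, 3 ≤ x) :
    ∀ x ∈ raiseLargest t e, 2 ≤ x := by
  have ht := h3 t (mem_cons_self t e)
  have he : ∀ x ∈ e, 3 ≤ x := fun x hx => h3 x (mem_cons_of_mem hx)
  unfold raiseLargest
  split_ifs with hB
  · intro x hx
    rcases mem_cons.1 hx with rfl | hx
    · omega
    · exact Nat.le_of_succ_le (he x hx)
  · push Not at hB
    intro x hx
    rcases mem_cons.1 hx with rfl | hx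
    · exact Nat.le_of_succ_le (he _ (sup_mem_of_ne_zero hB.1))
    rcases mem_add.1 hx with hx | hx
    · exact (eq_of_mem_replicate hx).ge
    · exact Nat.le_of_succ_le (he x hx)

lemma isParityAlternating_raiseLargest (hs : (t ::ₘ e).IsParityAlternating)
    (hle : ∀ x ∈ e, x ≤ t) (h3 : ∀ x ∈ t ::ₘ e, 3 ≤ x)
    (hodd : ∀ m ∈ t ::ₘ e, (∀ x ∈ t ::ₘ e, m ≤ x) → Odd m) :
    (raiseLargest t e).IsParityAlternating := by
  have he := hs.of_cons hle
  unfold raiseLargest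
  split_ifs with hB
  · refine he.cons_of_forall_ge (fun x hx => (hle x hx).trans t.le_succ) fun b hb hbmax _ => ?_
    rcases hB with rfl | ht
    · exact absurd hb (notMem_zero b)
    obtain rfl : b = t := (hle b hb).antisymm (hbmax t ht)
    rw [Nat.odd_iff, Nat.even_iff]
    omega
  · push Not at hB
    obtain ⟨hw, -, -⟩ := hs.second_largest_spec hle hB.1 hB.2
    have htwos : (replicate ((t + 1 - e.sup) / 2) 2 + e).IsParityAlternating := by
      refine he.replicate_add (fun x hx => Nat.le_of_succ_le (h3 x (mem_cons_of_mem hx)))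
        (fun b hb hbmin _ => ?_) _
      have hb_odd := hodd b (mem_cons_of_mem hb) fun x hx => by
        rcases mem_cons.1 hx with rfl | hx
        · exact hle b hb
        · exact hbmin x hx
      exact iff_of_false (by decide) (Nat.not_even_iff_odd.2 hb_odd)
    refine htwos.cons_of_forall_ge (fun x hx => ?_) fun b _ hbmax hbw => ?_
    · rcases mem_add.1 hx with hx | hx
      · rw [eq_of_mem_replicate hx]
        exact Nat.le_of_succ_le (h3 _ (mem_cons_of_mem hw))
      · exact le_sup hx
    · exact absurd (hbmax _ (mem_add.2 (.inr hw))) hbw.not_ge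

lemma lowerLargest_succ_cons (hle : ∀ x ∈ e, x ≤ t) (h3 : ∀ x ∈ t ::ₘ e, 3 ≤ x) :
    lowerLargest ((t + 1) ::ₘ e) = t ::ₘ e := by
  have h2 : 2 ∉ (t + 1) ::ₘ e := fun h => by
    rcases mem_cons.1 h with h | h
    · have := h3 t (mem_cons_self t e)
      omega
    · have := h3 2 (mem_cons_of_mem h)
      omega
  rw [lowerLargest, if_neg h2, sup_cons_of_forall_le fun x hx => (hle x hx).trans t.le_succ,
    erase_cons_head, Nat.succ_sub_one]

lemma lowerLargest_cons_replicate_two_add {w d : ℕ} (hw : w ∈ e) (hle : ∀ x ∈ e, x ≤ w)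
    (h3 : ∀ x ∈ e, 3 ≤ x) (hd : 0 < d) :
    lowerLargest (w ::ₘ (replicate d 2 + e)) = (w + 2 * d - 1) ::ₘ e := by
  have hmax : ∀ x ∈ replicate d 2 + e, x ≤ w := fun x hx => by
    rcases mem_add.1 hx with hx | hx
    · rw [eq_of_mem_replicate hx]
      exact Nat.le_of_succ_le (h3 w hw)
    · exact hle x hx
  have h2 : 2 ∈ w ::ₘ (replicate d 2 + e) :=
    mem_cons_of_mem (mem_add.2 (.inl (mem_replicate.2 ⟨hd.ne', rfl⟩)))
  have hw2 : w ≠ 2 := by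
    have := h3 w hw
    omega
  have hcount : count 2 e = 0 := count_eq_zero.2 fun h => by
    have := h3 2 h
    omega
  have hfilter : (replicate d 2 + e).filter (· ≠ 2) = e := by
    rw [filter_add, filter_eq_nil.2 fun x hx => by simp [eq_of_mem_replicate hx],
      filter_eq_self.2 fun x hx => by have := h3 x hx; omega, zero_add]
  rw [lowerLargest, if_pos h2, sup_cons_of_forall_le hmax, erase_cons_head, hfilter,
    count_cons_of_ne hw2.symm, count_add, count_replicate_self, hcount, add_zero]

lemma lowerLargest_raiseLargest (hs : (t ::ₘ e).IsParityAlternating)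
    (hle : ∀ x ∈ e, x ≤ t) (h3 : ∀ x ∈ t ::ₘ e, 3 ≤ x) :
    lowerLargest (raiseLargest t e) = t ::ₘ e := by
  unfold raiseLargest
  split_ifs with hB
  · exact lowerLargest_succ_cons hle h3
  · push Not at hB
    obtain ⟨hw, hwt, hsplit⟩ := hs.second_largest_spec hle hB.1 hB.2
    rw [lowerLargest_cons_replicate_two_add hw (fun x hx => le_sup hx)
      (fun x hx => h3 x (mem_cons_of_mem hx)) (by omega)]
    congr 1
    omega

lemma raiseLargest_ne_twosAndThree (hs : (t ::ₘ e).IsParityAlternating)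
    (hle : ∀ x ∈ e, x ≤ t) (h3 : ∀ x ∈ t ::ₘ e, 3 ≤ x) (N : ℕ) :
    raiseLargest t e ≠ twosAndThree N := by
  intro h
  have hmem : ∀ x ∈ raiseLargest t e, x = 3 ∨ x = 2 := fun x hx =>
    eq_three_or_eq_two_of_mem_twosAndThree (h ▸ hx)
  have hcount : count 3 (raiseLargest t e) ≤ 1 := h ▸ count_three_twosAndThree_le_one N
  unfold raiseLargest at hmem hcount
  split_ifs at hmem hcount with hB
  · have := hmem (t + 1) (mem_cons_self _ _)
    have := h3 t (mem_cons_self t e)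
    omega
  · push Not at hB
    obtain ⟨hw, -, -⟩ := hs.second_largest_spec hle hB.1 hB.2
    have hw3 : e.sup = 3 := by
      have := hmem _ (mem_cons_self _ _)
      have := h3 _ (mem_cons_of_mem hw)
      omega
    have : 0 < count 3 e := count_pos.2 (hw3 ▸ hw)
    rw [hw3, count_cons_self, count_add] at hcount
    omega

end raiseLargest

def LeastPartOneOrEven (s : Multiset ℕ) : Prop :=
  ∃ m ∈ s, (∀ x ∈ s, m ≤ x) ∧ (m = 1 ∨ Even m)

open Classical in
noncomputable def paSucc (s : Multiset ℕ) : Multiset ℕ :=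
  if LeastPartOneOrEven s then 1 ::ₘ s
  else raiseLargest s.sup (s.erase s.sup)

def paPred (q : Multiset ℕ) : Multiset ℕ :=
  if 1 ∈ q then q.erase 1 else lowerLargest q

section paSucc

variable {s : Multiset ℕ}

lemma sup_cons_erase_sup (hne : s ≠ 0) : s.sup ::ₘ s.erase s.sup = s :=
  cons_erase (sup_mem_of_ne_zero hne)

lemma le_sup_of_mem_erase_sup : ∀ x ∈ s.erase s.sup, x ≤ s.sup :=
  fun _ hx => le_sup (mem_of_mem_erase hx)

lemma three_le_and_odd_of_not_leastPartOneOrEven (hpos : ∀ x ∈ s, 0 < x) (hne : s ≠ 0)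
    (hA : ¬LeastPartOneOrEven s) :
    (∀ x ∈ s, 3 ≤ x) ∧ ∀ m ∈ s, (∀ x ∈ s, m ≤ x) → Odd m := by
  unfold LeastPartOneOrEven at hA
  push Not at hA
  refine ⟨fun x hx => ?_, fun m hm hmin => Nat.not_even_iff_odd.1 (hA m hm hmin).2⟩
  obtain ⟨m, hm, hmin⟩ := s.exists_min_image id hne
  obtain ⟨hm1, hm_odd⟩ := hA m hm hmin
  have := hpos m hm
  have : m ≤ x := hmin x hx
  rw [Nat.not_even_iff_odd, Nat.odd_iff] at hm_odd
  omega

lemma pos_of_mem_paSucc (hpos : ∀ x ∈ s, 0 < x) (hne : s ≠ 0) :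
    ∀ x ∈ paSucc s, 0 < x := by
  unfold paSucc
  split_ifs with hA
  · intro x hx
    rcases mem_cons.1 hx with rfl | hx
    · exact Nat.one_pos
    · exact hpos x hx
  · obtain ⟨h3, -⟩ := three_le_and_odd_of_not_leastPartOneOrEven hpos hne hA
    rw [← sup_cons_erase_sup hne] at h3
    exact fun x hx => Nat.zero_lt_of_lt (two_le_of_mem_raiseLargest h3 x hx)

lemma sum_paSucc (hs : s.IsParityAlternating) (hne : s ≠ 0) :
    (paSucc s).sum = s.sum + 1 := by
  unfold paSucc
  split_ifs with hA
  · rw [sum_cons, add_comm]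
  · rw [← sup_cons_erase_sup hne] at hs
    rw [sum_raiseLargest hs le_sup_of_mem_erase_sup, sup_cons_erase_sup hne]

lemma isParityAlternating_paSucc (hpos : ∀ x ∈ s, 0 < x) (hs : s.IsParityAlternating)
    (hne : s ≠ 0) : (paSucc s).IsParityAlternating := by
  unfold paSucc
  split_ifs with hA
  · obtain ⟨m, hm, hmin, hm1⟩ := hA
    refine hs.cons_of_forall_le (fun x hx => hpos x hx) fun b hb hbmin hb1 => ?_
    obtain rfl : m = b := (hmin b hb).antisymm (hbmin m hm)
    exact iff_of_true odd_one (hm1.resolve_left hb1.ne')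
  · obtain ⟨h3, hodd⟩ := three_le_and_odd_of_not_leastPartOneOrEven hpos hne hA
    rw [← sup_cons_erase_sup hne] at hs h3 hodd
    exact isParityAlternating_raiseLargest hs le_sup_of_mem_erase_sup h3 hodd

lemma paPred_paSucc (hpos : ∀ x ∈ s, 0 < x) (hs : s.IsParityAlternating) (hne : s ≠ 0) :
    paPred (paSucc s) = s := by
  unfold paSucc
  split_ifs with hA
  · rw [paPred, if_pos (mem_cons_self 1 s), erase_cons_head]
  · obtain ⟨h3, -⟩ := three_le_and_odd_of_not_leastPartOneOrEven hpos hne hA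
    rw [← sup_cons_erase_sup hne] at hs h3
    have h1 : 1 ∉ raiseLargest s.sup (s.erase s.sup) := fun h => by
      have := two_le_of_mem_raiseLargest h3 1 h
      omega
    rw [paPred, if_neg h1, lowerLargest_raiseLargest hs le_sup_of_mem_erase_sup h3,
      sup_cons_erase_sup hne]

lemma paSucc_ne_twosAndThree (hpos : ∀ x ∈ s, 0 < x) (hs : s.IsParityAlternating)
    (hne : s ≠ 0) (N : ℕ) : paSucc s ≠ twosAndThree N := by
  unfold paSucc
  split_ifs with hA
  · intro h
    have := eq_three_or_eq_two_of_mem_twosAndThree (h ▸ mem_cons_self 1 s)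
    omega
  · obtain ⟨h3, -⟩ := three_le_and_odd_of_not_leastPartOneOrEven hpos hne hA
    rw [← sup_cons_erase_sup hne] at hs h3
    exact raiseLargest_ne_twosAndThree hs le_sup_of_mem_erase_sup h3 N

end paSucc

end Multiset

open Multiset

lemma Nat.Partition.parts_ne_zero {n : ℕ} (p : n.Partition) (hn : n ≠ 0) : p.parts ≠ 0 := by
  intro h
  apply hn
  rw [← p.parts_sum, h, sum_zero]

noncomputable def succPA {n : ℕ} (hn : n ≠ 0) (p : {p : n.Partition // ParityAlternating p}) :
    {q : (n + 1).Partition // ParityAlternating q} :=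
  have hne := p.1.parts_ne_zero hn
  have hpos : ∀ x ∈ p.1.parts, 0 < x := fun _ hx => p.1.parts_pos hx
  ⟨⟨paSucc p.1.parts, fun hx => pos_of_mem_paSucc hpos hne _ hx,
      by rw [sum_paSucc p.2 hne, p.1.parts_sum]⟩,
    isParityAlternating_paSucc hpos p.2 hne⟩

lemma succPA_injective {n : ℕ} (hn : n ≠ 0) : Function.Injective (succPA hn) := by
  intro p p' h
  have hpred := congrArg (fun q => paPred q.1.parts) h
  simp only [succPA] at hpred
  rwa [paPred_paSucc (fun _ hx => p.1.parts_pos hx) p.2 (p.1.parts_ne_zero hn),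
    paPred_paSucc (fun _ hx => p'.1.parts_pos hx) p'.2 (p'.1.parts_ne_zero hn),
    ← Nat.Partition.ext_iff, ← Subtype.ext_iff] at hpred

def twosAndThreePA {N : ℕ} (hN : 2 ≤ N) : {q : N.Partition // ParityAlternating q} :=
  have hpos {x : ℕ} (hx : x ∈ twosAndThree N) : 0 < x := by
    rcases eq_three_or_eq_two_of_mem_twosAndThree hx with rfl | rfl <;> norm_num
  ⟨⟨twosAndThree N, hpos, sum_twosAndThree hN⟩, isParityAlternating_twosAndThree N⟩

lemma twosAndThreePA_notMem_range_succPA {n : ℕ} (hn : n ≠ 0) :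
    twosAndThreePA (by omega : 2 ≤ n + 1) ∉ Set.range (succPA hn) := by
  rintro ⟨p, hp⟩
  exact paSucc_ne_twosAndThree (fun _ hx => p.1.parts_pos hx) p.2 (p.1.parts_ne_zero hn) (n + 1)
    (congrArg (fun q => q.1.parts) hp)

theorem pa_strict_mono (n : ℕ) (hn : 1 ≤ n) : pa n < pa (n + 1) := by
  have hn0 : n ≠ 0 := Nat.one_le_iff_ne_zero.1 hn
  have := Fintype.ofFinite {p : n.Partition // ParityAlternating p}
  have := Fintype.ofFinite {q : (n + 1).Partition // ParityAlternating q}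
  rw [pa, pa, Nat.card_eq_fintype_card, Nat.card_eq_fintype_card]
  exact Fintype.card_lt_of_injective_of_notMem _ (succPA_injective hn0)
    (twosAndThreePA_notMem_range_succPA hn0)
end

section
/- For every positive integer n, pa(n) = p_o*(n); that is, the number of unlimited parity alternating partitions of n equals the number of partitions of n in which every part size other than the largest one occurs an odd number of times. -/
/-- Every part size other than the largest occurs an odd number of times. -/
def OddMultExceptLargest {n : ℕ} (p : n.Partition) : Prop :=
  ∀ a ∈ p.parts, (∃ b ∈ p.parts, a < b) → Odd (Multiset.count a p.parts)

/-- The number of partitions of `n` in which all distinct part sizes except possibly the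
largest one appear an odd number of times. -/
noncomputable def poStar (n : ℕ) : ℕ := Nat.card {p : n.Partition // OddMultExceptLargest p}

/-!
Conjugation of partitions (transposition of Young diagrams) is the bijection. Both conditions
say that every strict drop `rowLen i > rowLen (i + 1) > 0` between consecutive rows of the
Young diagram is odd: for the rows of a parity alternating partition these drops are the
differences of consecutive distinct parts, while the conjugate partition has exactly
`rowLen i - rowLen (i + 1)` parts equal to `i + 1`, and these are its parts below the largest.
-/

theorem Antitone.exists_eq_and_succ_lt {α : Type*} [LinearOrder α] {f : ℕ → α}
    (hf : Antitone f) {i k : ℕ} (h : f k < f i) : ∃ j < k, f j = f i ∧ f (j + 1) < f i := by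
  induction k with
  | zero => exact absurd (hf (Nat.zero_le i)) h.not_ge
  | succ k ih =>
    by_cases hk : f k < f i
    · obtain ⟨j, hjk, hj⟩ := ih hk
      exact ⟨j, hjk.trans k.lt_succ_self, hj⟩
    · have hik : i ≤ k := Nat.le_of_lt_succ (hf.reflect_lt h)
      exact ⟨k, k.lt_succ_self, le_antisymm (hf hik) (not_lt.1 hk), h⟩

namespace YoungDiagram

variable (μ : YoungDiagram)

theorem card_transpose : μ.transpose.card = μ.card := by
  simp [transpose, YoungDiagram.card]

theorem sum_rowLens : (μ.rowLens : Multiset ℕ).sum = μ.card := by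
  have hrow : ∀ c ∈ μ.cells, c.1 ∈ Finset.range (μ.colLen 0) := fun c hc => by
    rw [Finset.mem_range, ← mem_iff_lt_colLen]
    exact μ.up_left_mem le_rfl (Nat.zero_le _) hc
  rw [YoungDiagram.card, Finset.card_eq_sum_card_fiberwise hrow]
  exact Finset.sum_congr (s₁ := Finset.range (μ.colLen 0)) rfl fun i _ => μ.rowLen_eq_card

theorem mem_rowLens {a : ℕ} : a ∈ μ.rowLens ↔ 0 < a ∧ ∃ i, μ.rowLen i = a := by
  simp only [rowLens, List.mem_map, List.mem_range, ← mem_iff_lt_colLen, mem_iff_lt_rowLen]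
  constructor
  · rintro ⟨i, hi, rfl⟩
    exact ⟨hi, i, rfl⟩
  · rintro ⟨ha, i, rfl⟩
    exact ⟨i, ha, rfl⟩

theorem count_rowLens_succ (m : ℕ) :
    (μ.rowLens : Multiset ℕ).count (m + 1) = μ.colLen m - μ.colLen (m + 1) := by
  have hfilter : (Multiset.range (μ.colLen 0)).filter (fun i => m + 1 = μ.rowLen i)
      = (Finset.Ico (μ.colLen (m + 1)) (μ.colLen m)).val := by
    rw [← Finset.range_val, ← Finset.filter_val]
    congr 1
    ext i
    have h0 := μ.colLen_anti 0 m (Nat.zero_le _)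
    have hm : m < μ.rowLen i ↔ i < μ.colLen m := by rw [← mem_iff_lt_rowLen, mem_iff_lt_colLen]
    have hm' : m + 1 < μ.rowLen i ↔ i < μ.colLen (m + 1) := by
      rw [← mem_iff_lt_rowLen, mem_iff_lt_colLen]
    simp only [Finset.mem_filter, Finset.mem_range, Finset.mem_Ico]
    omega
  rw [rowLens, ← Multiset.map_coe, Multiset.coe_range, Multiset.count_map, hfilter]
  exact Nat.card_Ico _ _

def OddRowDrops : Prop :=
  ∀ i, 0 < μ.rowLen (i + 1) → μ.rowLen (i + 1) < μ.rowLen i →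
    Odd (μ.rowLen i - μ.rowLen (i + 1))

end YoungDiagram

namespace Nat.Partition

variable {n : ℕ}

def toYoungDiagram (p : n.Partition) : YoungDiagram :=
  YoungDiagram.ofRowLens (p.parts.sort (· ≥ ·)) (p.parts.pairwise_sort _).sortedGE

theorem toYoungDiagram_eq_iff {p : n.Partition} {μ : YoungDiagram} :
    p.toYoungDiagram = μ ↔ p.parts = μ.rowLens := by
  constructor
  · rintro rfl
    rw [toYoungDiagram, YoungDiagram.rowLens_ofRowLens_eq_self, Multiset.sort_eq]
    exact fun a ha => p.parts_pos ((Multiset.mem_sort _).1 ha)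
  · intro h
    have hsort : p.parts.sort (· ≥ ·) = μ.rowLens := by
      rw [h, Multiset.coe_sort, List.mergeSort_eq_self _ μ.rowLens_sorted.pairwise]
    rw [toYoungDiagram]
    convert YoungDiagram.ofRowLens_to_rowLens_eq_self (μ := μ) using 2

theorem parts_eq_rowLens_toYoungDiagram (p : n.Partition) :
    p.parts = p.toYoungDiagram.rowLens :=
  toYoungDiagram_eq_iff.1 rfl

def conj (p : n.Partition) : n.Partition where
  parts := p.toYoungDiagram.transpose.rowLens
  parts_pos hi := YoungDiagram.pos_of_mem_rowLens _ _ (Multiset.mem_coe.1 hi)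
  parts_sum := by
    rw [YoungDiagram.sum_rowLens, YoungDiagram.card_transpose, ← YoungDiagram.sum_rowLens,
      ← parts_eq_rowLens_toYoungDiagram, p.parts_sum]

theorem conj_parts (p : n.Partition) : p.conj.parts = p.toYoungDiagram.transpose.rowLens := rfl

theorem toYoungDiagram_conj (p : n.Partition) :
    p.conj.toYoungDiagram = p.toYoungDiagram.transpose :=
  toYoungDiagram_eq_iff.2 rfl

theorem conj_involutive : Function.Involutive (conj (n := n)) := fun p => by
  ext1
  rw [conj_parts, toYoungDiagram_conj, YoungDiagram.transpose_transpose,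
    ← parts_eq_rowLens_toYoungDiagram]

variable {p : n.Partition} {μ : YoungDiagram}

theorem parityAlternating_iff_oddRowDrops (h : p.parts = μ.rowLens) :
    ParityAlternating p ↔ μ.OddRowDrops := by
  rw [ParityAlternating, h]
  simp only [Multiset.mem_coe]
  constructor
  · intro hpa i hpos hlt
    have hgap : ∀ x ∈ μ.rowLens, ¬(μ.rowLen (i + 1) < x ∧ x < μ.rowLen i) := by
      rintro x hx ⟨hx1, hx2⟩
      obtain ⟨-, k, rfl⟩ := μ.mem_rowLens.1 hx
      rcases le_or_gt k i with hk | hk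
      · exact hx2.not_ge (μ.rowLen_anti _ _ hk)
      · exact hx1.not_ge (μ.rowLen_anti _ _ hk)
    rw [Nat.odd_sub' hlt.le]
    exact hpa _ (μ.mem_rowLens.2 ⟨hpos, _, rfl⟩) _ (μ.mem_rowLens.2 ⟨hpos.trans hlt, _, rfl⟩)
      hlt hgap
  · intro hdrops a ha b hb hab hgap
    obtain ⟨-, i, rfl⟩ := μ.mem_rowLens.1 hb
    obtain ⟨ha0, k, rfl⟩ := μ.mem_rowLens.1 ha
    obtain ⟨j, hjk, hj, hdrop⟩ := Antitone.exists_eq_and_succ_lt μ.rowLen_anti hab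
    have hkj : μ.rowLen k ≤ μ.rowLen (j + 1) := μ.rowLen_anti _ _ hjk
    have hnext : μ.rowLen (j + 1) = μ.rowLen k := by
      by_contra hne
      exact hgap _ (μ.mem_rowLens.2 ⟨ha0.trans_le hkj, _, rfl⟩)
        ⟨lt_of_le_of_ne hkj (Ne.symm hne), hdrop⟩
    rw [← hj] at hdrop ⊢
    rw [← hnext, ← Nat.odd_sub' hdrop.le]
    exact hdrops j (hnext ▸ ha0) hdrop

theorem oddMultExceptLargest_iff_oddRowDrops_transpose (h : p.parts = μ.rowLens) :
    OddMultExceptLargest p ↔ μ.transpose.OddRowDrops := by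
  rw [OddMultExceptLargest, h]
  simp only [YoungDiagram.OddRowDrops, YoungDiagram.rowLen_transpose, Multiset.mem_coe]
  constructor
  · intro home m hpos hlt
    have hm : m + 1 < μ.rowLen 0 :=
      YoungDiagram.mem_iff_lt_rowLen.1 (YoungDiagram.mem_iff_lt_colLen.2 hpos)
    have hmem : m + 1 ∈ μ.rowLens := by
      rw [← Multiset.mem_coe, ← Multiset.count_pos, μ.count_rowLens_succ]
      omega
    rw [← μ.count_rowLens_succ]
    exact home _ hmem ⟨_, μ.mem_rowLens.2 ⟨by omega, 0, rfl⟩, hm⟩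
  · rintro hdrops a ha ⟨b, hb, hab⟩
    obtain ⟨ha0, -⟩ := μ.mem_rowLens.1 ha
    obtain ⟨-, k, rfl⟩ := μ.mem_rowLens.1 hb
    obtain ⟨m, rfl⟩ := Nat.exists_eq_succ_of_ne_zero ha0.ne'
    have hcount := Multiset.count_pos.2 (Multiset.mem_coe.2 ha)
    rw [μ.count_rowLens_succ] at hcount ⊢
    have hcol : 0 < μ.colLen (m + 1) := Nat.zero_lt_of_lt
      (YoungDiagram.mem_iff_lt_colLen.1 (YoungDiagram.mem_iff_lt_rowLen.2 hab))
    exact hdrops m hcol (by omega)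

end Nat.Partition

theorem pa_eq_poStar_general (n : ℕ) : pa n = poStar n :=
  Nat.card_congr <| Nat.Partition.conj_involutive.toPerm _ |>.subtypeEquiv fun p => by
    rw [Function.Involutive.coe_toPerm,
      Nat.Partition.parityAlternating_iff_oddRowDrops p.parts_eq_rowLens_toYoungDiagram,
      Nat.Partition.oddMultExceptLargest_iff_oddRowDrops_transpose p.conj_parts,
      YoungDiagram.transpose_transpose]

theorem pa_eq_poStar (n : ℕ) (hn : 1 ≤ n) : pa n = poStar n :=
  pa_eq_poStar_general n
end

section
/- Conjugation of partitions gives a bijection between the set of unlimited parity alternating partitions of n and the set of partitions of n in which every part size other than the largest appears an odd number of times: the conjugate of any partition in which all distinct part sizes except the largest occur an odd number of times is an unlimited parity alternating partition, and vice versa. -/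
/-- The multiset of parts of the conjugate partition: its `k`-th part (for `1 ≤ k`)
is the number of parts of the original partition that are at least `k`. -/
def conjParts (s : Multiset ℕ) : Multiset ℕ :=
  Multiset.filter (0 < ·)
    ((Finset.Icc 1 s.sum).val.map fun k => Multiset.card (s.filter fun a => k ≤ a))

/-!
Write `F k` for the number of parts of `λ` that are at least `k`. The parts of the conjugate `λ'`
are the positive values among `F 1 ≥ F 2 ≥ ⋯`, and if `F'` is the same count for `λ'`, then
`i ≤ F k ↔ k ≤ F' i` for `i, k ≥ 1`; this Galois connection makes conjugation an involution.
Two consecutive distinct parts of `λ'` are exactly a pair `F (m + 1) < F m` where `m` is a part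
of `λ` other than the largest one, and the multiplicity of `m` in `λ` is `F m - F (m + 1)`, which
is odd iff these two parts of `λ'` have opposite parity.
-/

open Finset

def countGE (s : Multiset ℕ) (k : ℕ) : ℕ := s.countP (k ≤ ·)

section CountGE

variable {s : Multiset ℕ} {j k m : ℕ}

theorem countGE_antitone (s : Multiset ℕ) : Antitone (countGE s) := fun _ _ hjk => by
  simp only [countGE, Multiset.countP_eq_card_filter]
  exact Multiset.card_le_card (Multiset.monotone_filter_right s fun _ => hjk.trans)

theorem count_eq_countGE_sub (s : Multiset ℕ) (m : ℕ) :
    s.count m = countGE s m - countGE s (m + 1) := by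
  induction s using Multiset.induction with
  | empty => simp [countGE]
  | cons a t ih =>
    have := countGE_antitone t (Nat.le_add_right m 1)
    simp only [countGE, Multiset.countP_cons, Multiset.count_cons] at *
    split_ifs <;> omega

theorem le_sum_of_countGE_pos (h : 0 < countGE s k) : k ≤ s.sum := by
  obtain ⟨a, ha, hka⟩ := Multiset.countP_pos.mp h
  exact hka.trans (Multiset.le_sum_of_mem ha)

theorem conjParts_eq_filter_map_countGE (s : Multiset ℕ) :
    conjParts s = ((Icc 1 s.sum).val.map (countGE s)).filter (0 < ·) := by
  simp only [conjParts, ← Multiset.countP_eq_card_filter]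
  rfl

theorem mem_conjParts : m ∈ conjParts s ↔ 0 < m ∧ ∃ k ∈ Icc 1 s.sum, countGE s k = m := by
  simp only [conjParts_eq_filter_map_countGE, Multiset.mem_filter, Multiset.mem_map, mem_val]
  tauto

theorem pos_of_mem_conjParts (h : m ∈ conjParts s) : 0 < m :=
  (mem_conjParts.mp h).1

theorem countGE_mem_conjParts (hk : 1 ≤ k) (h : 0 < countGE s k) : countGE s k ∈ conjParts s :=
  mem_conjParts.mpr ⟨h, k, mem_Icc.mpr ⟨hk, le_sum_of_countGE_pos h⟩, rfl⟩

theorem countGE_conjParts (s : Multiset ℕ) (hj : 1 ≤ j) :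
    countGE (conjParts s) j = #{k ∈ Icc 1 s.sum | j ≤ countGE s k} := by
  rw [conjParts_eq_filter_map_countGE, countGE, Multiset.countP_filter, Multiset.countP_map]
  exact congrArg Multiset.card
    (Multiset.filter_congr fun k _ => ⟨And.left, fun h => ⟨h, by omega⟩⟩)

theorem le_card_filter_Icc_iff {P : ℕ → Prop} [DecidablePred P] {N : ℕ}
    (hP : ∀ ⦃i j⦄, i ≤ j → P j → P i) (hk : 1 ≤ k) :
    k ≤ #{i ∈ Icc 1 N | P i} ↔ k ≤ N ∧ P k := by
  constructor
  · intro h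
    have hN : #{i ∈ Icc 1 N | P i} ≤ N := by
      simpa using card_le_card (filter_subset P (Icc 1 N))
    refine ⟨h.trans hN, by_contra fun hPk => ?_⟩
    have hsub : {i ∈ Icc 1 N | P i} ⊆ Icc 1 (k - 1) := fun i hi => by
      simp only [mem_filter, mem_Icc] at hi ⊢
      exact ⟨hi.1.1, by_contra fun hik => hPk (hP (by omega) hi.2)⟩
    have := card_le_card hsub
    simp only [Nat.card_Icc] at this
    omega
  · rintro ⟨hkN, hPk⟩
    have hsub : Icc 1 k ⊆ {i ∈ Icc 1 N | P i} := fun i hi => by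
      simp only [mem_Icc] at hi
      simp only [mem_filter, mem_Icc]
      exact ⟨⟨hi.1, hi.2.trans hkN⟩, hP hi.2 hPk⟩
    simpa using card_le_card hsub

theorem le_countGE_conjParts_iff (hj : 1 ≤ j) (hk : 1 ≤ k) :
    k ≤ countGE (conjParts s) j ↔ j ≤ countGE s k := by
  rw [countGE_conjParts s hj,
    le_card_filter_Icc_iff (fun _ _ hik hj => hj.trans (countGE_antitone s hik)) hk]
  exact ⟨And.right, fun h => ⟨le_sum_of_countGE_pos (by omega), h⟩⟩

theorem countGE_conjParts_conjParts (hj : 1 ≤ j) :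
    countGE (conjParts (conjParts s)) j = countGE s j := by
  refine eq_of_forall_le_iff fun i => ?_
  rcases Nat.eq_zero_or_pos i with rfl | hi
  · simp
  · rw [le_countGE_conjParts_iff hj hi, le_countGE_conjParts_iff hi hj]

theorem conjParts_conjParts (hs : ∀ a ∈ s, 0 < a) : conjParts (conjParts s) = s := by
  ext m
  rcases Nat.eq_zero_or_pos m with rfl | hm
  · rw [Multiset.count_eq_zero.mpr fun h => (pos_of_mem_conjParts h).false,
      Multiset.count_eq_zero.mpr fun h => (hs 0 h).false]
  · rw [count_eq_countGE_sub, count_eq_countGE_sub, countGE_conjParts_conjParts hm,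
      countGE_conjParts_conjParts (by omega)]

theorem sum_countGE_Icc {N : ℕ} (hs : ∀ a ∈ s, 1 ≤ a ∧ a ≤ N) :
    ∑ k ∈ Icc 1 N, countGE s k = s.sum := by
  induction s using Multiset.induction with
  | empty => simp [countGE]
  | cons a t ih =>
    obtain ⟨ha1, haN⟩ := hs a (Multiset.mem_cons_self a t)
    have hIcc : #{k ∈ Icc 1 N | k ≤ a} = a := by
      rw [show {k ∈ Icc 1 N | k ≤ a} = Icc 1 a by ext; simp only [mem_filter, mem_Icc]; omega]
      simp
    simp only [countGE, Multiset.countP_cons, sum_add_distrib, sum_boole, Nat.cast_id,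
      Multiset.sum_cons] at ih ⊢
    rw [ih fun b hb => hs b (Multiset.mem_cons_of_mem hb), hIcc, add_comm]

theorem sum_filter_pos (t : Multiset ℕ) : (t.filter (0 < ·)).sum = t.sum := by
  have hzero : (t.filter fun x => ¬0 < x).sum = 0 :=
    Multiset.sum_eq_zero fun x hx => Nat.eq_zero_of_not_pos (Multiset.mem_filter.mp hx).2
  rw [← Multiset.sum_filter_add_sum_filter_not (s := t) (0 < ·), hzero, add_zero]

theorem sum_conjParts (hs : ∀ a ∈ s, 0 < a) : (conjParts s).sum = s.sum := by
  rw [conjParts_eq_filter_map_countGE, sum_filter_pos]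
  exact sum_countGE_Icc fun a ha => ⟨hs a ha, Multiset.le_sum_of_mem ha⟩

end CountGE

def ConsecutiveParts (s : Multiset ℕ) (a b : ℕ) : Prop :=
  a ∈ s ∧ b ∈ s ∧ a < b ∧ ∀ c ∈ s, ¬(a < c ∧ c < b)

section Consecutive

variable {s : Multiset ℕ} {a b : ℕ}

theorem exists_of_consecutiveParts_conjParts (h : ConsecutiveParts (conjParts s) a b) :
    ∃ m ∈ s, (∃ x ∈ s, m < x) ∧ countGE s (m + 1) = a ∧ countGE s m = b := by
  obtain ⟨ha, hb, hab, hgap⟩ := h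
  obtain ⟨hb0, k₀, hk₀, hFk₀⟩ := mem_conjParts.mp hb
  obtain ⟨ha0, k₁, hk₁, hFk₁⟩ := mem_conjParts.mp ha
  have hk₀1 := (mem_Icc.mp hk₀).1
  have hk₁1 := (mem_Icc.mp hk₁).1
  -- `K` is the last position at which `countGE s` still reaches `b`
  set K := countGE (conjParts s) b
  have hle_K : ∀ k, 1 ≤ k → (k ≤ K ↔ b ≤ countGE s k) := fun k hk =>
    le_countGE_conjParts_iff hb0 hk
  have hk₀K : k₀ ≤ K := (hle_K k₀ hk₀1).mpr hFk₀.ge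
  have hFK : countGE s K = b :=
    le_antisymm (hFk₀ ▸ countGE_antitone s hk₀K) ((hle_K K (by omega)).mp le_rfl)
  have hFK1 : countGE s (K + 1) < b :=
    lt_of_not_ge fun h => by have := (hle_K (K + 1) (by omega)).mpr h; omega
  have hKk₁ : K < k₁ := lt_of_not_ge fun h => by have := (hle_K k₁ hk₁1).mp h; omega
  have hFK1a : countGE s (K + 1) = a := by
    refine le_antisymm (not_lt.mp fun hlt => hgap _ ?_ ⟨hlt, hFK1⟩)
      (hFk₁ ▸ countGE_antitone s hKk₁)
    exact countGE_mem_conjParts (by omega) (by omega)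
  refine ⟨K, ?_, ?_, hFK1a, hFK⟩
  · rw [← Multiset.count_pos, count_eq_countGE_sub]
    omega
  · obtain ⟨x, hx, hKx⟩ := Multiset.countP_pos.mp (show 0 < countGE s (K + 1) by omega)
    exact ⟨x, hx, hKx⟩

theorem consecutiveParts_conjParts_of_mem (hs : ∀ a ∈ s, 0 < a) {m x : ℕ} (hm : m ∈ s)
    (hx : x ∈ s) (hmx : m < x) :
    ConsecutiveParts (conjParts s) (countGE s (m + 1)) (countGE s m) := by
  have hpos : 0 < countGE s (m + 1) := Multiset.countP_pos.mpr ⟨x, hx, hmx⟩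
  have hlt : countGE s (m + 1) < countGE s m := by
    have := Multiset.count_pos.mpr hm
    rw [count_eq_countGE_sub] at this
    omega
  refine ⟨countGE_mem_conjParts (by omega) hpos, countGE_mem_conjParts (hs m hm) (by omega), hlt,
    ?_⟩
  rintro c hc ⟨hac, hcb⟩
  obtain ⟨-, k, -, rfl⟩ := mem_conjParts.mp hc
  have := (countGE_antitone s).reflect_lt hcb
  have := (countGE_antitone s).reflect_lt hac
  omega

theorem consecutiveParts_conjParts_iff (hs : ∀ a ∈ s, 0 < a) :
    ConsecutiveParts (conjParts s) a b ↔
      ∃ m ∈ s, (∃ x ∈ s, m < x) ∧ countGE s (m + 1) = a ∧ countGE s m = b := by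
  refine ⟨exists_of_consecutiveParts_conjParts, ?_⟩
  rintro ⟨m, hm, ⟨x, hx, hmx⟩, rfl, rfl⟩
  exact consecutiveParts_conjParts_of_mem hs hm hx hmx

theorem forall_consecutiveParts_conjParts_iff (hs : ∀ a ∈ s, 0 < a) :
    (∀ a b, ConsecutiveParts (conjParts s) a b → (Odd a ↔ Even b)) ↔
      ∀ m ∈ s, (∃ x ∈ s, m < x) → Odd (s.count m) := by
  simp_rw [consecutiveParts_conjParts_iff hs]
  constructor
  · intro h m hm hx
    rw [count_eq_countGE_sub, Nat.odd_sub' (countGE_antitone s (Nat.le_add_right m 1))]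
    exact h _ _ ⟨m, hm, hx, rfl, rfl⟩
  · rintro h _ _ ⟨m, hm, hx, rfl, rfl⟩
    rw [← Nat.odd_sub' (countGE_antitone s (Nat.le_add_right m 1)), ← count_eq_countGE_sub]
    exact h m hm hx

end Consecutive

namespace Nat.Partition

variable {n : ℕ}

def conjugate (p : n.Partition) : n.Partition where
  parts := conjParts p.parts
  parts_pos := pos_of_mem_conjParts
  parts_sum := by rw [sum_conjParts fun _ => p.parts_pos, p.parts_sum]

theorem conjugate_involutive : Function.Involutive (conjugate (n := n)) :=
  fun p => Nat.Partition.ext (conjParts_conjParts fun _ => p.parts_pos)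

theorem parityAlternating_iff (p : n.Partition) :
    ParityAlternating p ↔ ∀ a b, ConsecutiveParts p.parts a b → (Odd a ↔ Even b) := by
  simp only [ParityAlternating, ConsecutiveParts]
  exact ⟨fun h a b ⟨ha, hb, hab, hgap⟩ => h a ha b hb hab hgap,
    fun h a ha b hb hab hgap => h a b ⟨ha, hb, hab, hgap⟩⟩

theorem parityAlternating_conjugate_iff (p : n.Partition) :
    ParityAlternating p.conjugate ↔ OddMultExceptLargest p := by
  rw [parityAlternating_iff]
  exact forall_consecutiveParts_conjParts_iff fun _ => p.parts_pos

end Nat.Partition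

theorem conj_bijection_paritaryAlternating_general (n : ℕ) :
    ∃ e : {p : n.Partition // OddMultExceptLargest p} ≃
          {p : n.Partition // ParityAlternating p},
      (∀ p, (e p).val.parts = conjParts p.val.parts) ∧
      (∀ q, (e.symm q).val.parts = conjParts q.val.parts) :=
  ⟨(Nat.Partition.conjugate_involutive.toPerm _).subtypeEquiv fun p =>
      (Nat.Partition.parityAlternating_conjugate_iff p).symm,
    fun _ => rfl, fun _ => rfl⟩

theorem conj_bijection_paritaryAlternating (n : ℕ) (hn : 1 ≤ n) :
    ∃ e : {p : n.Partition // OddMultExceptLargest p} ≃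
          {p : n.Partition // ParityAlternating p},
      (∀ p, (e p).val.parts = conjParts p.val.parts) ∧
      (∀ q, (e.symm q).val.parts = conjParts q.val.parts) :=
  conj_bijection_paritaryAlternating_general n
end

section
/- For |q| < 1, ∑_{n≥1} pa(n) q^n = 2·∑_{n≥1} (((√5−1)/2; q)_n · (−(√5+1)/2; q)_n) / ((q;q)_n · (−1;q)_n) · q^n; equivalently, the generating function of pa(n) equals twice the basic hypergeometric sum with upper parameters (√5−1)/2 and −(√5+1)/2 and lower parameter −1, evaluated at argument q, minus its n = 0 term. -/
/-- The finite q-Pochhammer symbol `(a; q)_n = ∏_{k=0}^{n-1} (1 - a q^k)`. -/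
def qPoch (a q : ℂ) (n : ℕ) : ℂ := ∏ k ∈ Finset.range n, (1 - a * q ^ k)

/-!
A partition `λ₀ ≥ λ₁ ≥ ⋯ ≥ λ_M > 0` is encoded by its gaps `δⱼ = λⱼ - λⱼ₊₁` (with `λ_{M+1} = 0`),
so that `λᵢ = ∑_{j ≥ i} δⱼ` and `∑ λᵢ = ∑ (j + 1) δⱼ`. It is parity alternating exactly when every
gap `δⱼ` with `j < M` is `0` or odd, while the last gap `δ_M = λ_M` is any positive integer. The
gaps are then independent, so the partitions with `M + 1` parts have generating function
`∏_{j < M} (1 + y_j / (1 - y_j²)) · q^{M+1} / (1 - q^{M+1})` with `y_j = q^{j+1}`. Since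
`1 + y / (1 - y²) = (1 + y - y²) / ((1 - y)(1 + y))` and `1 + y - y² = (1 - a y)(1 - b y)` for
`a = (√5 - 1)/2`, `b = -(√5 + 1)/2`, this is twice the `n = M` term of the basic hypergeometric
series; summing over `M` gives the theorem.
-/

open Finset

section PiProduct

variable {R α : Type*} [NormedCommRing R]

theorem summable_norm_prod_pi {n : ℕ} {g : Fin n → α → R}
    (hg : ∀ j, Summable fun e => ‖g j e‖) :
    Summable fun δ : Fin n → α => ‖∏ j, g j (δ j)‖ := by
  induction n with
  | zero => exact .of_finite
  | succ n ih =>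
    rw [← (Fin.consEquiv fun _ => α).summable_iff]
    simpa [Function.comp_def, Fin.prod_univ_succ] using
      (hg 0).mul_norm (ih fun j => hg j.succ)

theorem hasSum_prod_pi [CompleteSpace R] {n : ℕ} {g : Fin n → α → R} {a : Fin n → R}
    (hg : ∀ j, HasSum (g j) (a j)) (hg' : ∀ j, Summable fun e => ‖g j e‖) :
    HasSum (fun δ : Fin n → α => ∏ j, g j (δ j)) (∏ j, a j) := by
  induction n with
  | zero => simp
  | succ n ih =>
    let G : (Fin n → α) → R := fun δ => ∏ j : Fin n, g j.succ (δ j)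
    have ih' : HasSum G (∏ j : Fin n, a j.succ) := ih (fun j => hg j.succ) fun j => hg' j.succ
    have hs : Summable fun x : α × (Fin n → α) => g 0 x.1 * G x.2 :=
      summable_mul_of_summable_norm (f := g 0) (g := G) (hg' 0)
        (summable_norm_prod_pi fun j => hg' j.succ)
    rw [← (Fin.consEquiv fun _ => α).hasSum_iff, Fin.prod_univ_succ]
    simpa [Function.comp_def, Fin.prod_univ_succ] using (hg 0).mul ih' hs

end PiProduct

section GeometricSeries

variable {K : Type*} [NormedDivisionRing K] {y : K}

theorem summable_norm_ite_pow (hy : ‖y‖ < 1) (p : ℕ → Prop) [DecidablePred p] :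
    Summable fun e => ‖if p e then y ^ e else 0‖ := by
  refine (summable_geometric_of_lt_one (norm_nonneg y) hy).of_nonneg_of_le
    (fun _ => norm_nonneg _) fun e => ?_
  split_ifs <;> simp

theorem hasSum_ite_pos_pow (hy : ‖y‖ < 1) :
    HasSum (fun e => if 0 < e then y ^ e else 0) (y / (1 - y)) := by
  have h : HasSum (fun e : ℕ => y * y ^ e) (y * (1 - y)⁻¹) :=
    (hasSum_geometric_of_norm_lt_one hy).mul_left y
  simpa [div_eq_mul_inv] using HasSum.zero_add (f := fun e => if 0 < e then y ^ e else 0)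
    (by simpa only [Nat.succ_pos, if_true, pow_succ'] using h)

theorem hasSum_ite_zero_or_odd_pow (hy : ‖y‖ < 1) :
    HasSum (fun e => if e = 0 ∨ Odd e then y ^ e else 0) (1 + y / (1 - y ^ 2)) := by
  have hy2 : ‖y ^ 2‖ < 1 := by rw [norm_pow]; nlinarith [norm_nonneg y]
  have h : HasSum (fun k : ℕ => y * (y ^ 2) ^ k) (y * (1 - y ^ 2)⁻¹) :=
    (hasSum_geometric_of_norm_lt_one hy2).mul_left y
  refine HasSum.even_add_odd ?_ ?_
  · convert hasSum_ite_eq 0 (1 : K) using 2 with k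
    by_cases hk : k = 0 <;> simp [hk]
  · convert h using 2 with k
    · simp [pow_succ', pow_mul]
    · rw [div_eq_mul_inv]

end GeometricSeries

section AntitoneSequences

theorem Antitone.sum_Ico_tsub {f : ℕ → ℕ} (hf : Antitone f) {i n : ℕ} (h : i ≤ n) :
    ∑ j ∈ Ico i n, (f j - f (j + 1)) = f i - f n := by
  induction n, h using Nat.le_induction with
  | base => simp
  | succ n hin ih =>
    rw [sum_Ico_succ_top hin, ih]
    have : f n ≤ f i := hf hin
    have : f (n + 1) ≤ f n := hf (by omega)
    omega

theorem Antitone.exists_adjacent_eq {f : ℕ → ℕ} (hf : Antitone f) {i k : ℕ} (hlt : f k < f i)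
    (hgap : ∀ j ≤ k, ¬(f k < f j ∧ f j < f i)) : ∃ j < k, f j = f i ∧ f (j + 1) = f k := by
  classical
  -- `j + 1` is the first index at which `f` drops below `f i`.
  have hex : ∃ j, f j < f i := ⟨k, hlt⟩
  obtain ⟨j, hj⟩ : ∃ j, Nat.find hex = j + 1 := by
    refine Nat.exists_eq_add_one_of_ne_zero fun h0 => ?_
    have := Nat.find_spec hex
    rw [h0] at this
    exact absurd (hf (Nat.zero_le i)) (not_le.2 this)
  have hlt' : f (j + 1) < f i := hj ▸ Nat.find_spec hex
  have hle : j + 1 ≤ k := hj ▸ Nat.find_min' hex hlt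
  have hge : f i ≤ f j := not_lt.1 (Nat.find_min hex (by omega))
  have hij : i ≤ j := by
    by_contra h
    exact absurd (hf (show j + 1 ≤ i by omega)) (not_le.2 hlt')
  refine ⟨j, by omega, le_antisymm (hf hij) hge, ?_⟩
  have := hf hle
  have := hgap (j + 1) hle
  omega

theorem Multiset.exists_antitone_eq_map_range (s : Multiset ℕ) :
    ∃ f : ℕ → ℕ, Antitone f ∧ f (card s) = 0 ∧ s = (range (card s)).map f := by
  obtain ⟨L, hL, rfl⟩ : ∃ L : List ℕ, L.Pairwise (· ≥ ·) ∧ s = ↑L :=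
    ⟨_, pairwise_sort s (· ≥ ·), (sort_eq s _).symm⟩
  refine ⟨fun i => L.getD i 0, fun i j hij => ?_, by simp, ?_⟩
  · simp only [List.getD_eq_getElem?_getD]
    rcases lt_or_ge j L.length with hj | hj
    · rw [List.getElem?_eq_getElem hj, List.getElem?_eq_getElem (by omega)]
      rcases hij.eq_or_lt with rfl | hij
      · exact le_rfl
      · exact List.pairwise_iff_getElem.1 hL i j (by omega) hj hij
    · simp [List.getElem?_eq_none hj]
  · rw [coe_card, Multiset.range, Multiset.map_coe, Multiset.coe_eq_coe]
    exact List.Perm.of_eq (List.ext_getElem (by simp) fun i h₁ _ => by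
      simp [List.getElem?_eq_getElem h₁])

theorem Multiset.eq_of_map_range_eq {f g : ℕ → ℕ} (hf : Antitone f) (hg : Antitone g) {m n : ℕ}
    (h : (range m).map f = (range n).map g) : m = n ∧ ∀ i < m, f i = g i := by
  obtain rfl : m = n := by simpa using congrArg card h
  have hsorted {f : ℕ → ℕ} (hf : Antitone f) : ((List.range m).map f).Pairwise (· ≥ ·) :=
    List.pairwise_map.2 <| List.pairwise_lt_range.imp fun hij => hf hij.le
  rw [Multiset.range, map_coe, map_coe, coe_eq_coe] at h
  have := List.map_inj_left.1 (h.eq_of_pairwise' (hsorted hf) (hsorted hg))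
  exact ⟨rfl, fun i hi => this i (List.mem_range.2 hi)⟩

theorem parityAlternating_iff_of_parts_eq {n M : ℕ} {p : n.Partition} {f : ℕ → ℕ}
    (hf : Antitone f) (hp : p.parts = (Multiset.range (M + 1)).map f) :
    ParityAlternating p ↔ ∀ j < M, f j - f (j + 1) = 0 ∨ Odd (f j - f (j + 1)) := by
  have mem {c : ℕ} : c ∈ p.parts ↔ ∃ i ≤ M, f i = c := by
    simp only [hp, Multiset.mem_map, Multiset.mem_range, Nat.lt_succ_iff]
  constructor
  · intro hpa j hj
    rcases (hf (show j ≤ j + 1 by omega)).eq_or_lt with h | h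
    · left; omega
    refine .inr <| (Nat.odd_sub' h.le).2 <| hpa _ (mem.2 ⟨j + 1, hj, rfl⟩) _
      (mem.2 ⟨j, by omega, rfl⟩) h ?_
    rintro c hc ⟨h₁, h₂⟩
    obtain ⟨i, -, rfl⟩ := mem.1 hc
    rcases le_or_gt i j with hij | hij
    · exact absurd (hf hij) (not_le.2 h₂)
    · exact absurd (hf (show j + 1 ≤ i by omega)) (not_le.2 h₁)
  · rintro hgap a ha b hb hab hmid
    obtain ⟨k, hk, rfl⟩ := mem.1 ha
    obtain ⟨i, -, rfl⟩ := mem.1 hb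
    obtain ⟨j, hjk, hj, hj₁⟩ :=
      hf.exists_adjacent_eq hab fun j hj => hmid _ (mem.2 ⟨j, by omega, rfl⟩)
    have := hgap j (by omega)
    rw [hj, hj₁] at this
    rcases this with h | h
    · omega
    · exact (Nat.odd_sub' hab.le).1 h

end AntitoneSequences

section TailSums

variable {M : ℕ}

def gapSeq (δ : Fin (M + 1) → ℕ) (j : ℕ) : ℕ := if h : j < M + 1 then δ ⟨j, h⟩ else 0

def tailSum (δ : Fin (M + 1) → ℕ) (i : ℕ) : ℕ := ∑ j ∈ Ico i (M + 1), gapSeq δ j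

def gapWeight (δ : Fin (M + 1) → ℕ) : ℕ := ∑ j : Fin (M + 1), ((j : ℕ) + 1) * δ j

variable (δ : Fin (M + 1) → ℕ)

theorem gapSeq_val (j : Fin (M + 1)) : gapSeq δ j = δ j := dif_pos j.2

theorem tailSum_antitone : Antitone (tailSum δ) := fun _ _ h =>
  sum_le_sum_of_subset (Ico_subset_Ico h le_rfl)

theorem tailSum_eq_add {i : ℕ} (hi : i < M + 1) :
    tailSum δ i = gapSeq δ i + tailSum δ (i + 1) :=
  sum_eq_sum_Ico_succ_bot hi _

theorem tailSum_eq_zero {i : ℕ} (hi : M + 1 ≤ i) : tailSum δ i = 0 := by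
  simp [tailSum, Ico_eq_empty_of_le hi]

theorem gapSeq_eq_tailSum_sub (j : ℕ) : gapSeq δ j = tailSum δ j - tailSum δ (j + 1) := by
  rcases lt_or_ge j (M + 1) with hj | hj
  · rw [tailSum_eq_add δ hj]; omega
  · rw [gapSeq, dif_neg (by omega), tailSum_eq_zero δ hj, tailSum_eq_zero δ (by omega)]

theorem tailSum_injective : Function.Injective (tailSum (M := M)) := by
  intro δ δ' h
  funext j
  have := gapSeq_eq_tailSum_sub δ j
  rwa [h, ← gapSeq_eq_tailSum_sub, gapSeq_val, gapSeq_val] at this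

theorem sum_range_tailSum : ∑ i ∈ range (M + 1), tailSum δ i = gapWeight δ := by
  unfold tailSum
  rw [sum_comm' (t' := range (M + 1)) (s' := fun j => range (j + 1))
    fun i j => by simp only [mem_Ico, mem_range]; omega]
  simp only [sum_const, card_range, smul_eq_mul, gapWeight,
    sum_range fun j => (j + 1) * gapSeq δ j, gapSeq_val]

theorem tailSum_of_antitone {f : ℕ → ℕ} (hf : Antitone f) (hM : f (M + 1) = 0) :
    tailSum (fun j : Fin (M + 1) => f j - f (j + 1)) = f := by
  funext i
  rcases le_or_gt i (M + 1) with hi | hi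
  · conv_rhs => rw [← Nat.sub_zero (f i), ← hM, ← hf.sum_Ico_tsub hi]
    exact sum_congr rfl fun j hj => dif_pos (mem_Ico.1 hj).2
  · have := hf hi.le
    rw [tailSum_eq_zero _ hi.le]
    omega

end TailSums

/-- `e` is a possible value of the gap `λⱼ - λⱼ₊₁` of a parity alternating partition
`λ₀ ≥ ⋯ ≥ λ_M > 0`, where `λ_{M+1} = 0`, so that the last gap is the smallest part. -/
def AllowedGap (M j e : ℕ) : Prop := if j < M then e = 0 ∨ Odd e else 0 < e

instance (M j e : ℕ) : Decidable (AllowedGap M j e) := by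
  unfold AllowedGap; infer_instance

abbrev PAGaps : Type :=
  Σ M : ℕ, {δ : Fin (M + 1) → ℕ // ∀ j : Fin (M + 1), AllowedGap M j (δ j)}

namespace PAGaps

variable (t : PAGaps)

def weight : ℕ := gapWeight t.2.1

def parts : Multiset ℕ := (Multiset.range (t.1 + 1)).map (tailSum t.2.1)

theorem parts_pos {i : ℕ} (hi : i ∈ t.parts) : 0 < i := by
  obtain ⟨M, δ, hδ⟩ := t
  obtain ⟨k, hk, rfl⟩ := Multiset.mem_map.1 hi
  have hlast : 0 < δ (Fin.last M) := by simpa [AllowedGap] using hδ (Fin.last M)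
  rw [← gapSeq_val δ, Fin.val_last] at hlast
  dsimp only at hk ⊢
  calc 0 < gapSeq δ M + tailSum δ (M + 1) := Nat.add_pos_left hlast _
    _ = tailSum δ M := (tailSum_eq_add δ (Nat.lt_succ_self M)).symm
    _ ≤ tailSum δ k := tailSum_antitone δ (Nat.lt_succ_iff.1 (Multiset.mem_range.1 hk))

theorem sum_parts : t.parts.sum = t.weight := sum_range_tailSum t.2.1

theorem weight_ne_zero : t.weight ≠ 0 := by
  have hmem : tailSum t.2.1 0 ∈ t.parts :=
    Multiset.mem_map_of_mem _ (Multiset.mem_range.2 (Nat.succ_pos _))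
  have := t.parts_pos hmem
  have := Multiset.le_sum_of_mem hmem
  rw [t.sum_parts] at this
  omega

def toPartition {m : ℕ} (h : t.weight = m) : m.Partition :=
  ⟨t.parts, t.parts_pos, t.sum_parts.trans h⟩

theorem parityAlternating_toPartition {m : ℕ} (h : t.weight = m) :
    ParityAlternating (t.toPartition h) := by
  refine (parityAlternating_iff_of_parts_eq (tailSum_antitone t.2.1) rfl).2 fun j hj => ?_
  rw [← gapSeq_eq_tailSum_sub, gapSeq, dif_pos (by omega)]
  simpa [AllowedGap, hj] using t.2.2 ⟨j, by omega⟩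

def toPAPartition (m : ℕ) (t : {t : PAGaps // t.weight = m}) :
    {p : m.Partition // ParityAlternating p} :=
  ⟨t.1.toPartition t.2, t.1.parityAlternating_toPartition t.2⟩

theorem toPAPartition_injective (m : ℕ) : Function.Injective (toPAPartition m) := by
  rintro ⟨⟨M, δ, hδ⟩, hw⟩ ⟨⟨M', δ', hδ'⟩, hw'⟩ h
  obtain ⟨hMM', hagree⟩ := Multiset.eq_of_map_range_eq (tailSum_antitone δ)
    (tailSum_antitone δ') (congrArg (fun p => p.1.parts) h)
  dsimp only at hMM'
  obtain rfl : M = M' := by omega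
  obtain rfl : δ = δ' := tailSum_injective <| funext fun i => (lt_or_ge i (M + 1)).elim
    (hagree i) fun hi => by rw [tailSum_eq_zero _ hi, tailSum_eq_zero _ hi]
  rfl

theorem toPAPartition_surjective {m : ℕ} (hm : m ≠ 0) :
    Function.Surjective (toPAPartition m) := by
  rintro ⟨p, hp⟩
  obtain ⟨f, hf, hf0, hparts⟩ := p.parts.exists_antitone_eq_map_range
  obtain ⟨M, hM⟩ : ∃ M, Multiset.card p.parts = M + 1 := Nat.exists_eq_add_one_of_ne_zero
    fun h => hm (p.parts_sum ▸ by simp [Multiset.card_eq_zero.1 h])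
  rw [hM] at hf0 hparts
  have hallowed (j : Fin (M + 1)) : AllowedGap M j (f j - f (j + 1)) := by
    unfold AllowedGap
    split_ifs with hj
    · exact (parityAlternating_iff_of_parts_eq hf hparts).1 hp j hj
    · have hjM : (j : ℕ) = M := by omega
      rw [hjM, hf0, Nat.sub_zero]
      exact p.parts_pos (hparts ▸ Multiset.mem_map_of_mem f
        (Multiset.mem_range.2 (Nat.lt_succ_self M)))
  let t : PAGaps := ⟨M, ⟨fun j => f j - f (j + 1), hallowed⟩⟩
  have ht : t.parts = p.parts := by
    rw [hparts, PAGaps.parts, tailSum_of_antitone hf hf0]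
  exact ⟨⟨t, by rw [← t.sum_parts, ht, p.parts_sum]⟩, Subtype.ext (Nat.Partition.ext ht)⟩

theorem card_weight_eq {m : ℕ} (hm : m ≠ 0) :
    Nat.card {t : PAGaps // t.weight = m} = pa m :=
  Nat.card_eq_of_bijective _ ⟨toPAPartition_injective m, toPAPartition_surjective hm⟩

end PAGaps

section GeneratingFunction

/-- The generating function of the parity alternating partitions with exactly `M + 1` parts. -/
def paPartsGenFun {K : Type*} [Field K] (x : K) (M : ℕ) : K :=
  (∏ j ∈ range M, (1 + x ^ (j + 1) / (1 - (x ^ (j + 1)) ^ 2))) *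
    (x ^ (M + 1) / (1 - x ^ (M + 1)))

variable {K : Type*} [NormedField K] {x : K}

theorem hasSum_allowedGap (hx : ‖x‖ < 1) (M j : ℕ) :
    HasSum (fun e => if AllowedGap M j e then x ^ ((j + 1) * e) else 0)
      (if j < M then 1 + x ^ (j + 1) / (1 - (x ^ (j + 1)) ^ 2)
        else x ^ (j + 1) / (1 - x ^ (j + 1))) := by
  have hy : ‖x ^ (j + 1)‖ < 1 := by
    rw [norm_pow]; exact pow_lt_one₀ (norm_nonneg x) hx (by omega)
  simp only [pow_mul]
  by_cases hj : j < M
  · simpa [AllowedGap, hj] using hasSum_ite_zero_or_odd_pow hy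
  · simpa [AllowedGap, hj] using hasSum_ite_pos_pow hy

theorem hasSum_pow_gapWeight [CompleteSpace K] (hx : ‖x‖ < 1) (M : ℕ) :
    HasSum (fun δ : {δ : Fin (M + 1) → ℕ // ∀ j : Fin (M + 1), AllowedGap M j (δ j)} =>
      x ^ gapWeight δ.1) (paPartsGenFun x M) := by
  have hnorm (j : Fin (M + 1)) :
      Summable fun e => ‖if AllowedGap M j e then x ^ (((j : ℕ) + 1) * e) else 0‖ := by
    have hy : ‖x ^ ((j : ℕ) + 1)‖ < 1 := by
      rw [norm_pow]; exact pow_lt_one₀ (norm_nonneg x) hx (by omega)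
    simpa only [pow_mul] using summable_norm_ite_pow hy (AllowedGap M j)
  have key := hasSum_prod_pi (fun j : Fin (M + 1) => hasSum_allowedGap hx M j) hnorm
  refine hasSum_subtype_iff_indicator (f := fun δ => x ^ gapWeight δ)
    (s := {δ | ∀ j : Fin (M + 1), AllowedGap M j (δ j)}) |>.2 ?_
  convert key using 1
  · ext δ
    rw [prod_ite_zero, prod_pow_eq_pow_sum]
    simp [Set.indicator_apply, gapWeight]
  · rw [Fin.prod_univ_castSucc, paPartsGenFun, ← Fin.prod_univ_eq_prod_range]
    simp

end GeneratingFunction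

section Convergence

theorem div_one_sub_mem_Icc {x u r : ℝ} (hx : 0 ≤ x) (hur : u ≤ r) (hr : r < 1) :
    x / (1 - u) ∈ Set.Icc 0 (x / (1 - r)) :=
  ⟨div_nonneg hx (by linarith), div_le_div_of_nonneg_left hx (by linarith) (by linarith)⟩

variable {r : ℝ} (hr0 : 0 ≤ r) (hr1 : r < 1)
include hr0 hr1

theorem paPartsGenFun_factors_mem_Icc (n : ℕ) :
    r ^ (n + 1) / (1 - (r ^ (n + 1)) ^ 2) ∈ Set.Icc 0 (r ^ (n + 1) / (1 - r)) ∧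
      r ^ (n + 1) / (1 - r ^ (n + 1)) ∈ Set.Icc 0 (r ^ (n + 1) / (1 - r)) := by
  have h0 : 0 ≤ r ^ (n + 1) := pow_nonneg hr0 _
  have h1 : r ^ (n + 1) ≤ r := pow_le_of_le_one hr0 hr1.le (by omega)
  exact ⟨div_one_sub_mem_Icc h0 (by nlinarith) hr1, div_one_sub_mem_Icc h0 h1 hr1⟩

theorem paPartsGenFun_nonneg (M : ℕ) : 0 ≤ paPartsGenFun r M :=
  mul_nonneg (prod_nonneg fun j _ =>
    add_nonneg zero_le_one (paPartsGenFun_factors_mem_Icc hr0 hr1 j).1.1)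
    (paPartsGenFun_factors_mem_Icc hr0 hr1 M).2.1

theorem paPartsGenFun_le (M : ℕ) :
    paPartsGenFun r M ≤ Real.exp ((1 - r)⁻¹ / (1 - r)) * (r ^ (M + 1) / (1 - r)) := by
  have hgeom : ∑ j ∈ range M, r ^ (j + 1) ≤ (1 - r)⁻¹ :=
    calc ∑ j ∈ range M, r ^ (j + 1) ≤ ∑ j ∈ range M, r ^ j :=
          sum_le_sum fun j _ => pow_le_pow_of_le_one hr0 hr1.le (by omega)
      _ ≤ (1 - r)⁻¹ := by
          have := geom_sum_Ico_le_of_lt_one (m := 0) (n := M) hr0 hr1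
          rwa [← Finset.range_eq_Ico, pow_zero, one_div] at this
  have hprod : ∏ j ∈ range M, (1 + r ^ (j + 1) / (1 - (r ^ (j + 1)) ^ 2)) ≤
      Real.exp ((1 - r)⁻¹ / (1 - r)) :=
    calc _ ≤ Real.exp (∑ j ∈ range M, r ^ (j + 1) / (1 - (r ^ (j + 1)) ^ 2)) :=
          Real.prod_one_add_le_exp_sum _ fun j => (paPartsGenFun_factors_mem_Icc hr0 hr1 j).1.1
      _ ≤ Real.exp ((∑ j ∈ range M, r ^ (j + 1)) / (1 - r)) := by
          rw [sum_div]
          exact Real.exp_le_exp.2 <| sum_le_sum fun j _ =>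
            (paPartsGenFun_factors_mem_Icc hr0 hr1 j).1.2
      _ ≤ Real.exp ((1 - r)⁻¹ / (1 - r)) := by gcongr
  exact mul_le_mul hprod (paPartsGenFun_factors_mem_Icc hr0 hr1 M).2.2
    (paPartsGenFun_factors_mem_Icc hr0 hr1 M).2.1 (Real.exp_nonneg _)

theorem summable_paPartsGenFun : Summable (paPartsGenFun r) := by
  refine .of_nonneg_of_le (paPartsGenFun_nonneg hr0 hr1) (paPartsGenFun_le hr0 hr1) ?_
  simp_rw [pow_succ, mul_div_assoc]
  exact ((summable_geometric_of_lt_one hr0 hr1).mul_right _).mul_left _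

end Convergence

section Counting

theorem tsum_pow_eq_tsum_card_mul_pow {K T : Type*} [NormedRing K] [CompleteSpace K] {q : K}
    (w : T → ℕ) (hs : Summable fun t => q ^ w t) :
    ∑' t, q ^ w t = ∑' m, (Nat.card {t // w t = m} : K) * q ^ m := by
  have hs' : Summable fun c : Σ m, {t // w t = m} => q ^ w (Equiv.sigmaFiberEquiv w c) :=
    (Equiv.sigmaFiberEquiv w).summable_iff.2 hs
  rw [← (Equiv.sigmaFiberEquiv w).tsum_eq, hs'.tsum_sigma]
  refine tsum_congr fun m => ?_
  calc ∑' t : {t // w t = m}, q ^ w (Equiv.sigmaFiberEquiv w ⟨m, t⟩)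
      = ∑' _ : {t // w t = m}, q ^ m := tsum_congr fun t => by
        rw [Equiv.sigmaFiberEquiv_apply, t.2]
    _ = (Nat.card {t // w t = m} : K) * q ^ m := by rw [tsum_const, nsmul_eq_mul]

variable {K : Type*} [NormedField K] [CompleteSpace K] {q : K}

theorem PAGaps.summable_pow_weight (hq : ‖q‖ < 1) : Summable fun t : PAGaps => q ^ t.weight := by
  have hr : ‖‖q‖‖ < 1 := by rwa [norm_norm]
  refine .of_norm ?_
  simp only [norm_pow]
  refine (summable_sigma_of_nonneg fun t => pow_nonneg (norm_nonneg q) _).2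
    ⟨fun M => (hasSum_pow_gapWeight hr M).summable, ?_⟩
  exact (summable_paPartsGenFun (norm_nonneg q) hq).congr fun M =>
    (hasSum_pow_gapWeight hr M).tsum_eq.symm

theorem PAGaps.tsum_pow_weight (hs : Summable fun t : PAGaps => q ^ t.weight) :
    ∑' t : PAGaps, q ^ t.weight = ∑' n, (pa (n + 1) : K) * q ^ (n + 1) := by
  rw [tsum_pow_eq_tsum_card_mul_pow _ hs, ← (add_left_injective 1).tsum_eq]
  · exact tsum_congr fun n => by rw [card_weight_eq n.succ_ne_zero]
  · have : IsEmpty {t : PAGaps // t.weight = 0} := ⟨fun t => t.1.weight_ne_zero t.2⟩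
    intro m hm
    obtain ⟨n, rfl⟩ : ∃ n, m = n + 1 := Nat.exists_eq_add_one_of_ne_zero <| by
      rintro rfl
      simp at hm
    exact ⟨n, rfl⟩

end Counting

section QPochhammer

theorem qPoch_succ_eq_one_sub_mul (a q : ℂ) (n : ℕ) :
    qPoch a q (n + 1) = (1 - a) * ∏ k ∈ range n, (1 - a * q ^ (k + 1)) := by
  rw [qPoch, prod_range_succ', pow_zero, mul_one, mul_comm]

theorem qPoch_self_succ (q : ℂ) (n : ℕ) :
    qPoch q q (n + 1) = (∏ k ∈ range n, (1 - q ^ (k + 1))) * (1 - q ^ (n + 1)) := by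
  simp only [qPoch, ← pow_succ', prod_range_succ]

/-- The two parameters are the roots of `z² + z - 1`: their sum and product are both `-1`. -/
theorem one_sub_golden_mul_one_sub_golden (y : ℂ) :
    (1 - (((√5 - 1) / 2 : ℝ) : ℂ) * y) * (1 - (-(((√5 + 1) / 2 : ℝ) : ℂ)) * y) =
      1 + y - y ^ 2 := by
  have h5 : ((√5 : ℝ) : ℂ) ^ 2 = 5 := by norm_cast; simp
  push_cast
  linear_combination (-y ^ 2 / 4) * h5

theorem one_add_div_one_sub_sq {y : ℂ} (h₁ : 1 - y ≠ 0) (h₂ : 1 + y ≠ 0) :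
    1 + y / (1 - y ^ 2) =
      (1 - (((√5 - 1) / 2 : ℝ) : ℂ) * y) * (1 - (-(((√5 + 1) / 2 : ℝ) : ℂ)) * y) /
        ((1 - y) * (1 + y)) := by
  rw [one_sub_golden_mul_one_sub_golden, show 1 - y ^ 2 = (1 - y) * (1 + y) by ring]
  field_simp
  ring

theorem paPartsGenFun_eq_qPoch {q : ℂ} (hq : ‖q‖ < 1) (M : ℕ) :
    paPartsGenFun q M = 2 * (qPoch (((√5 - 1) / 2 : ℝ) : ℂ) q (M + 1) *
      qPoch (-(((√5 + 1) / 2 : ℝ) : ℂ)) q (M + 1) /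
      (qPoch q q (M + 1) * qPoch (-1) q (M + 1)) * q ^ (M + 1)) := by
  have hlt (n : ℕ) : ‖q ^ (n + 1)‖ < 1 := by
    rw [norm_pow]; exact pow_lt_one₀ (norm_nonneg q) hq (by omega)
  have hsub (n : ℕ) : 1 - q ^ (n + 1) ≠ 0 := fun h => by
    simpa [show q ^ (n + 1) = 1 by linear_combination -h] using hlt n
  have hadd (n : ℕ) : 1 + q ^ (n + 1) ≠ 0 := fun h => by
    simpa [show q ^ (n + 1) = -1 by linear_combination h] using hlt n
  have hD := hsub M
  have hB : ∏ k ∈ range M, (1 - q ^ (k + 1)) ≠ 0 := prod_ne_zero_iff.2 fun k _ => hsub k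
  have hC : ∏ k ∈ range M, (1 + q ^ (k + 1)) ≠ 0 := prod_ne_zero_iff.2 fun k _ => hadd k
  have hab := one_sub_golden_mul_one_sub_golden 1
  rw [paPartsGenFun, prod_congr rfl fun k _ => one_add_div_one_sub_sq (hsub k) (hadd k),
    qPoch_self_succ, qPoch_succ_eq_one_sub_mul, qPoch_succ_eq_one_sub_mul,
    qPoch_succ_eq_one_sub_mul, prod_div_distrib, prod_mul_distrib, prod_mul_distrib]
  simp only [neg_mul, one_mul, sub_neg_eq_add, mul_one] at hab ⊢
  generalize ∏ k ∈ range M, (1 - (((√5 - 1) / 2 : ℝ) : ℂ) * q ^ (k + 1)) = A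
  generalize ∏ k ∈ range M, (1 + (((√5 + 1) / 2 : ℝ) : ℂ) * q ^ (k + 1)) = A'
  field_simp
  linear_combination (-2 * A * A' * q ^ (M + 1)) * hab

end QPochhammer

theorem pa_generating_function_basic_hypergeometric (q : ℂ) (hq : ‖q‖ < 1) :
    ∑' n : ℕ, (pa (n + 1) : ℂ) * q ^ (n + 1) =
      2 * ∑' n : ℕ,
        qPoch (((Real.sqrt 5 - 1) / 2 : ℝ) : ℂ) q (n + 1) *
          qPoch (-(((Real.sqrt 5 + 1) / 2 : ℝ) : ℂ)) q (n + 1) /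
          (qPoch q q (n + 1) * qPoch (-1) q (n + 1)) * q ^ (n + 1) := by
  have hs := PAGaps.summable_pow_weight hq
  have hsum : HasSum (paPartsGenFun q) (∑' t : PAGaps, q ^ t.weight) :=
    hs.hasSum.sigma fun M => hasSum_pow_gapWeight hq M
  rw [← PAGaps.tsum_pow_weight hs, ← hsum.tsum_eq, ← tsum_mul_left]
  exact tsum_congr (paPartsGenFun_eq_qPoch hq)
end

section
/- The integral ∫_0^1 log(1 + x − x²)/x dx equals 2·(log((1+√5)/2))². -/
/-!
The integrand `log (1 + x(1 - x)) / x` becomes `log (1 + x(1 - x)) / (1 - x)` under `x ↦ 1 - x`,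
so twice the integral is `∫₀¹ log (1 + x(1 - x)) / (x(1 - x)) dx`. Writing
`log (1 + c) / c = ∫₀¹ dt / (1 + t c)` and exchanging the integrals, the inner integral
`∫₀¹ dx / (1 + t x(1 - x))` is elementary and equals `d/dt [4 arsinh (√t / 2)²]`. Hence twice the
integral is `4 arsinh (1 / 2)² = 4 log ((1 + √5) / 2)²`.
-/

open Real MeasureTheory intervalIntegral Set

theorem intervalIntegral_integral_swap_of_continuousOn {E : Type*} [NormedAddCommGroup E]
    [NormedSpace ℝ E] {f : ℝ → ℝ → E} {a b c d : ℝ} (hab : a ≤ b) (hcd : c ≤ d)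
    (hf : ContinuousOn (Function.uncurry f) (Icc a b ×ˢ Icc c d)) :
    ∫ x in a..b, ∫ y in c..d, f x y = ∫ y in c..d, ∫ x in a..b, f x y := by
  have hint : Integrable (Function.uncurry f)
      ((volume.restrict (Ioc a b)).prod (volume.restrict (Ioc c d))) := by
    rw [Measure.prod_restrict, ← Measure.volume_eq_prod]
    exact (hf.integrableOn_compact (isCompact_Icc.prod isCompact_Icc)).mono_set
      (prod_mono Ioc_subset_Icc_self Ioc_subset_Icc_self)
  simp only [integral_of_le hab, integral_of_le hcd]
  exact integral_integral_swap hint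

theorem integral_inv_one_add_mul {c : ℝ} (hc : -1 < c) (hc0 : c ≠ 0) :
    ∫ t in (0:ℝ)..1, (1 + t * c)⁻¹ = log (1 + c) / c := by
  have hzero : (0:ℝ) ∉ uIcc 1 (1 + c) := by
    rw [mem_uIcc]; rintro (⟨h, -⟩ | ⟨h, -⟩) <;> linarith
  simp_rw [mul_comm _ c]
  rw [integral_comp_add_mul (fun u => u⁻¹) hc0, mul_zero, add_zero, mul_one, integral_inv hzero,
    div_one, smul_eq_mul, inv_mul_eq_div]

theorem integral_div_mul_one_sub_of_symm {h : ℝ → ℝ} (hsymm : ∀ x, h (1 - x) = h x)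
    (hint : IntervalIntegrable (fun x => h x / x) volume 0 1) :
    ∫ x in (0:ℝ)..1, h x / (x * (1 - x)) = 2 * ∫ x in (0:ℝ)..1, h x / x := by
  have hint' : IntervalIntegrable (fun x => h x / (1 - x)) volume 0 1 := by
    simpa [hsymm] using (hint.comp_sub_left 1).symm
  have hreflect : ∫ x in (0:ℝ)..1, h x / (1 - x) = ∫ x in (0:ℝ)..1, h x / x := by
    simpa [hsymm] using integral_comp_sub_left (fun x => h x / x) (1:ℝ) (a := 0) (b := 1)
  have hsplit : ∀ᵐ x, x ∈ uIoc (0:ℝ) 1 →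
      h x / (x * (1 - x)) = h x / x + h x / (1 - x) := by
    filter_upwards [Measure.ae_ne volume (1:ℝ)] with x hx1 hx
    rw [uIoc_of_le zero_le_one] at hx
    have h1x : 1 - x ≠ 0 := sub_ne_zero.2 (Ne.symm hx1)
    field_simp [hx.1.ne', h1x]
    ring
  rw [integral_congr_ae hsplit, integral_add hint hint', hreflect, two_mul]

theorem intervalIntegrable_log_one_add_mul_one_sub_div :
    IntervalIntegrable (fun x => log (1 + x * (1 - x)) / x) volume 0 1 := by
  refine (intervalIntegrable_const (c := (1:ℝ))).mono_fun'
    (by fun_prop : Measurable fun x : ℝ => log (1 + x * (1 - x)) / x).aestronglyMeasurable ?_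
  refine ae_restrict_of_forall_mem measurableSet_uIoc fun x hx => ?_
  rw [uIoc_of_le zero_le_one] at hx
  obtain ⟨hx0, hx1⟩ := hx
  have hc : 0 ≤ x * (1 - x) := mul_nonneg hx0.le (by linarith)
  have hlog : log (1 + x * (1 - x)) ≤ x * (1 - x) := by
    linarith [log_le_sub_one_of_pos (by linarith : 0 < 1 + x * (1 - x))]
  dsimp only
  rw [norm_of_nonneg (div_nonneg (log_nonneg (by linarith)) hx0.le), div_le_one hx0]
  nlinarith

theorem integral_inv_one_add_four_mul_sq_mul_one_sub {s : ℝ} (hs : s ≠ 0) :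
    ∫ x in (0:ℝ)..1, (1 + 4 * s ^ 2 * (x * (1 - x)))⁻¹ = arsinh s / (s * √(1 + s ^ 2)) := by
  set σ := √(1 + s ^ 2) with hσ_def
  have hσ2 : σ ^ 2 = 1 + s ^ 2 := sq_sqrt (by positivity)
  have hσ : |s| < σ := by
    rw [← sqrt_sq_eq_abs]; exact sqrt_lt_sqrt (sq_nonneg _) (by linarith)
  have hσ0 : σ ≠ 0 := by linarith [abs_nonneg s]
  have hfactor : ∀ x, 1 + 4 * s ^ 2 * (x * (1 - x)) =
      (σ + s * (2 * x - 1)) * (σ - s * (2 * x - 1)) := fun x => by linear_combination -hσ2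
  have hpos : ∀ x ∈ uIcc (0:ℝ) 1, 0 < σ + s * (2 * x - 1) ∧ 0 < σ - s * (2 * x - 1) := by
    intro x hx
    rw [uIcc_of_le zero_le_one] at hx
    have : |s * (2 * x - 1)| ≤ |s| := by
      rw [abs_mul]
      exact mul_le_of_le_one_right (abs_nonneg s)
        (abs_le.2 ⟨by linarith [hx.1], by linarith [hx.2]⟩)
    constructor <;> linarith [le_abs_self (s * (2 * x - 1)), neg_abs_le (s * (2 * x - 1))]
  have hderiv : ∀ x ∈ uIcc (0:ℝ) 1, HasDerivAt
      (fun x => (log (σ + s * (2 * x - 1)) - log (σ - s * (2 * x - 1))) / (4 * s * σ))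
      (1 + 4 * s ^ 2 * (x * (1 - x)))⁻¹ x := by
    intro x hx
    obtain ⟨hplus, hminus⟩ := hpos x hx
    have hlin : HasDerivAt (fun x => s * (2 * x - 1)) (2 * s) x := by
      simpa [mul_comm] using (((hasDerivAt_id x).const_mul 2).sub_const 1).const_mul s
    refine ((((hlin.const_add σ).log hplus.ne').sub
      ((hlin.const_sub σ).log hminus.ne')).div_const (4 * s * σ)).congr_deriv ?_
    rw [hfactor]
    field_simp
    ring
  have hint : IntervalIntegrable (fun x => (1 + 4 * s ^ 2 * (x * (1 - x)))⁻¹) volume 0 1 := by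
    refine ContinuousOn.intervalIntegrable (ContinuousOn.inv₀ (by fun_prop) fun x hx => ?_)
    rw [hfactor]; exact (mul_pos (hpos x hx).1 (hpos x hx).2).ne'
  have hlog : log (σ - s) = - log (σ + s) := by
    rw [← log_inv]; congr 1
    exact eq_inv_of_mul_eq_one_left (by linear_combination hσ2)
  rw [integral_eq_sub_of_hasDerivAt hderiv hint, arsinh, ← hσ_def]
  norm_num [← sub_eq_add_neg, hlog, add_comm s σ]
  field_simp
  ring

theorem hasDerivAt_four_mul_arsinh_sqrt_div_two_sq {t : ℝ} (ht : 0 < t) :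
    HasDerivAt (fun u => 4 * arsinh (√u / 2) ^ 2)
      (arsinh (√t / 2) / (√t / 2 * √(1 + (√t / 2) ^ 2))) t := by
  have h : HasDerivAt (fun u => arsinh (√u / 2)) _ t :=
    ((hasDerivAt_sqrt ht.ne').div_const 2).arsinh
  refine ((h.pow 2).const_mul 4).congr_deriv ?_
  have : 0 < √t := sqrt_pos.2 ht
  norm_num
  field_simp
  ring

theorem integral_integral_inv_one_add_mul_mul_one_sub {T : ℝ} (hT : 0 ≤ T) :
    ∫ t in (0:ℝ)..T, ∫ x in (0:ℝ)..1, (1 + t * (x * (1 - x)))⁻¹ = 4 * arsinh (√T / 2) ^ 2 := by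
  have hcont : ContinuousOn (fun u => 4 * arsinh (√u / 2) ^ 2) (uIcc 0 T) :=
    (continuous_const.mul
      ((continuous_arsinh.comp (continuous_sqrt.div_const 2)).pow 2)).continuousOn
  have hderiv : ∀ t ∈ Ioo (min 0 T) (max 0 T), HasDerivAt (fun u => 4 * arsinh (√u / 2) ^ 2)
      (∫ x in (0:ℝ)..1, (1 + t * (x * (1 - x)))⁻¹) t := by
    intro t ht
    rw [min_eq_left hT, max_eq_right hT] at ht
    have hs : √t / 2 ≠ 0 := (div_pos (sqrt_pos.2 ht.1) two_pos).ne'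
    have ht4 : t = 4 * (√t / 2) ^ 2 := by rw [div_pow, sq_sqrt ht.1.le]; ring
    rw [ht4, integral_inv_one_add_four_mul_sq_mul_one_sub hs, ← ht4]
    exact hasDerivAt_four_mul_arsinh_sqrt_div_two_sq ht.1
  have hnonneg : ∀ t ∈ Ioo (min 0 T) (max 0 T),
      0 ≤ ∫ x in (0:ℝ)..1, (1 + t * (x * (1 - x)))⁻¹ := by
    intro t ht
    rw [min_eq_left hT, max_eq_right hT] at ht
    refine integral_nonneg zero_le_one fun x hx => inv_nonneg.2 ?_
    nlinarith [mul_nonneg ht.1.le (mul_nonneg hx.1 (sub_nonneg.2 hx.2))]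
  rw [integral_eq_sub_of_hasDerivAt_of_le hT (by simpa [uIcc_of_le hT] using hcont)
    (fun t ht => hderiv t (by simpa [hT] using ht))
    (intervalIntegrable_deriv_of_nonneg hcont hderiv hnonneg)]
  simp

theorem arsinh_one_half : arsinh (1 / 2) = log ((1 + √5) / 2) := by
  rw [arsinh]
  congr 1
  rw [show (1:ℝ) + (1 / 2) ^ 2 = 5 / 2 ^ 2 by norm_num, sqrt_div' _ (by positivity),
    sqrt_sq zero_le_two]
  ring

theorem integral_log_one_add_x_sub_sq :
    ∫ x in (0:ℝ)..1, Real.log (1 + x - x ^ 2) / x =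
      2 * Real.log ((1 + Real.sqrt 5) / 2) ^ 2 := by
  have hpoly : ∀ x : ℝ, 1 + x - x ^ 2 = 1 + x * (1 - x) := fun x => by ring
  have hsymm := integral_div_mul_one_sub_of_symm (h := fun x => log (1 + x * (1 - x)))
    (fun x => by ring_nf) intervalIntegrable_log_one_add_mul_one_sub_div
  have hparam : ∫ x in (0:ℝ)..1, log (1 + x * (1 - x)) / (x * (1 - x)) =
      ∫ x in (0:ℝ)..1, ∫ t in (0:ℝ)..1, (1 + t * (x * (1 - x)))⁻¹ := by
    refine integral_congr_ae ?_
    filter_upwards [Measure.ae_ne volume (1:ℝ)] with x hx1 hx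
    rw [uIoc_of_le zero_le_one] at hx
    have hc : 0 < x * (1 - x) := mul_pos hx.1 (sub_pos.2 (lt_of_le_of_ne hx.2 hx1))
    exact (integral_inv_one_add_mul (by linarith) hc.ne').symm
  have hcont : ContinuousOn (Function.uncurry fun x t : ℝ => (1 + t * (x * (1 - x)))⁻¹)
      (Icc 0 1 ×ˢ Icc 0 1) := by
    refine ContinuousOn.inv₀ (by fun_prop) ?_
    rintro ⟨x, t⟩ ⟨⟨hx0, hx1⟩, ht0, -⟩
    have : 0 ≤ t * (x * (1 - x)) := mul_nonneg ht0 (mul_nonneg hx0 (sub_nonneg.2 hx1))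
    exact (by linarith : (0:ℝ) < 1 + t * (x * (1 - x))).ne'
  rw [hparam, intervalIntegral_integral_swap_of_continuousOn zero_le_one zero_le_one hcont,
    integral_integral_inv_one_add_mul_mul_one_sub zero_le_one, sqrt_one, arsinh_one_half] at hsymm
  simp_rw [hpoly]
  linarith
end

section
/- For every partition of a positive integer n in which every part size other than the largest appears an odd number of times, and for |q| < 1, these partitions are generated by ∑_{n≥1} p_o*(n) q^n = ∑_{n≥1} (q^n/(1−q^n)) ∏_{k=1}^{n−1} (1 + q^k/(1−q^{2k})), where in the n-th summand the factor q^n/(1−q^n) accounts for the largest part n appearing any positive number of times and each factor 1 + q^k/(1−q^{2k}) accounts for the part k appearing zero times or an odd number of times. -/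
open Finset

section FiniteProductOfSeries

variable {R ι : Type*} [NormedCommRing R] [CompleteSpace R]

theorem summable_norm_and_hasSum_prod_fin {n : ℕ} {g : Fin n → ι → R} {s : Fin n → R}
    (hg : ∀ i, Summable fun a => ‖g i a‖) (hs : ∀ i, HasSum (g i) (s i)) :
    (Summable fun f : Fin n → ι => ‖∏ i, g i (f i)‖) ∧
      HasSum (fun f : Fin n → ι => ∏ i, g i (f i)) (∏ i, s i) := by
  induction n with
  | zero => exact ⟨.of_finite, by simp⟩
  | succ n ih =>
    obtain ⟨ih_norm, ih⟩ := ih (fun i => hg i.succ) (fun i => hs i.succ)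
    let e := Fin.consEquiv fun _ : Fin (n + 1) => ι
    have he : ∀ p, ∏ i, g i (e p i) = g 0 p.1 * ∏ i : Fin n, g i.succ (p.2 i) := fun p => by
      simp [e, Fin.prod_univ_succ]
    rw [← e.summable_iff, ← e.hasSum_iff, Fin.prod_univ_succ]
    simp only [Function.comp_def, he]
    have hnorm := (hg 0).mul_norm ih_norm
    have hsum := summable_mul_of_summable_norm (hg 0) ih_norm
    have hprod := (hs 0).mul ih hsum
    exact ⟨hnorm, hprod⟩

end FiniteProductOfSeries

abbrev ZeroOrOdd : Type := {m : ℕ // m = 0 ∨ Odd m}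

def zeroOrOddOfNat : ℕ → ZeroOrOdd
  | 0 => ⟨0, .inl rfl⟩
  | j + 1 => ⟨2 * j + 1, .inr ⟨j, rfl⟩⟩

theorem bijective_zeroOrOddOfNat : Function.Bijective zeroOrOddOfNat := by
  refine ⟨?_, ?_⟩
  · rintro (_ | i) (_ | j) h <;> simp_all [zeroOrOddOfNat]
  · rintro ⟨m, rfl | ⟨j, rfl⟩⟩
    exacts [⟨0, rfl⟩, ⟨j + 1, rfl⟩]

def weight {n : ℕ} (f : Fin n → ZeroOrOdd) : ℕ := ∑ i : Fin n, ((i : ℕ) + 1) * (f i : ℕ)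

/-- `⟨n, j, f⟩` records a partition with largest part `n + 1` of multiplicity `j + 1`, in which
each smaller part `i + 1` has multiplicity `f i`. -/
abbrev Profile : Type := Σ n : ℕ, ℕ × (Fin n → ZeroOrOdd)

def Profile.size (b : Profile) : ℕ := (b.1 + 1) * (b.2.1 + 1) + weight b.2.2

section SeriesIdentities

variable {K : Type*} [NormedField K] {x : K}

theorem hasSum_pow_add_mul (hx : ‖x‖ < 1) {k : ℕ} (hk : k ≠ 0) (a : ℕ) :
    HasSum (fun j : ℕ => x ^ (a + k * j)) (x ^ a / (1 - x ^ k)) := by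
  have hxk : ‖x ^ k‖ < 1 := by rw [norm_pow]; exact pow_lt_one₀ (norm_nonneg x) hx hk
  simpa only [pow_add, pow_mul, div_eq_mul_inv] using
    (hasSum_geometric_of_norm_lt_one hxk).mul_left (x ^ a)

theorem hasSum_pow_mul_succ (hx : ‖x‖ < 1) {k : ℕ} (hk : k ≠ 0) :
    HasSum (fun j : ℕ => x ^ (k * (j + 1))) (x ^ k / (1 - x ^ k)) := by
  convert hasSum_pow_add_mul hx hk k using 2 with j
  ring

theorem hasSum_pow_mul_zeroOrOdd [CompleteSpace K] (hx : ‖x‖ < 1) {k : ℕ} (hk : k ≠ 0) :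
    HasSum (fun m : ZeroOrOdd => x ^ (k * m)) (1 + x ^ k / (1 - x ^ (2 * k))) := by
  rw [← (Equiv.ofBijective _ bijective_zeroOrOddOfNat).hasSum_iff]
  change HasSum (fun j => x ^ (k * (zeroOrOddOfNat j : ℕ))) _
  have hodd : HasSum (fun j : ℕ => x ^ (k * (2 * j + 1))) (x ^ k / (1 - x ^ (2 * k))) := by
    convert hasSum_pow_add_mul hx (by omega : 2 * k ≠ 0) k using 2 with j
    ring
  simpa [zeroOrOddOfNat] using
    HasSum.zero_add (f := fun j => x ^ (k * (zeroOrOddOfNat j : ℕ))) hodd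

theorem hasSum_pow_weight [CompleteSpace K] (hx : ‖x‖ < 1) (n : ℕ) :
    HasSum (fun f : Fin n → ZeroOrOdd => x ^ weight f)
      (∏ k ∈ Icc 1 n, (1 + x ^ k / (1 - x ^ (2 * k)))) := by
  have hnorm : ‖‖x‖‖ < 1 := by rwa [norm_norm]
  have h := (summable_norm_and_hasSum_prod_fin
    (g := fun (i : Fin n) (m : ZeroOrOdd) => x ^ (((i : ℕ) + 1) * (m : ℕ)))
    (fun i => by simpa only [norm_pow] using
      (hasSum_pow_mul_zeroOrOdd hnorm (i : ℕ).add_one_ne_zero).summable)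
    (fun i => hasSum_pow_mul_zeroOrOdd hx (i : ℕ).add_one_ne_zero)).2
  rw [Fin.prod_univ_eq_prod_range (fun i => 1 + x ^ (i + 1) / (1 - x ^ (2 * (i + 1)))),
    range_eq_Ico, prod_Ico_add' (fun k => 1 + x ^ k / (1 - x ^ (2 * k))), zero_add,
    Ico_add_one_right_eq_Icc] at h
  simpa only [prod_pow_eq_pow_sum, weight] using h

theorem hasSum_pow_size_fiber [CompleteSpace K] (hx : ‖x‖ < 1) (n : ℕ) :
    HasSum (fun d : ℕ × (Fin n → ZeroOrOdd) => x ^ Profile.size ⟨n, d⟩)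
      (x ^ (n + 1) / (1 - x ^ (n + 1)) * ∏ k ∈ Icc 1 n, (1 + x ^ k / (1 - x ^ (2 * k)))) := by
  have hnorm : ‖‖x‖‖ < 1 := by rwa [norm_norm]
  have hsum := summable_mul_of_summable_norm
    (f := fun j : ℕ => x ^ ((n + 1) * (j + 1))) (g := fun f => x ^ weight f)
    (by simpa only [norm_pow] using (hasSum_pow_mul_succ hnorm n.add_one_ne_zero).summable)
    (by simpa only [norm_pow] using (hasSum_pow_weight hnorm n).summable)
  have hprod := (hasSum_pow_mul_succ hx n.add_one_ne_zero).mul (hasSum_pow_weight hx n) hsum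
  simpa only [Profile.size, pow_add] using hprod

end SeriesIdentities

theorem pow_div_one_sub_pow_nonneg {r : ℝ} (h0 : 0 ≤ r) (h1 : r ≤ 1) (k m : ℕ) :
    0 ≤ r ^ k / (1 - r ^ m) :=
  div_nonneg (pow_nonneg h0 k) (sub_nonneg.2 (pow_le_one₀ h0 h1))

theorem prod_one_add_pow_div_le {r : ℝ} (h0 : 0 ≤ r) (h1 : r < 1) (n : ℕ) :
    ∏ k ∈ Icc 1 n, (1 + r ^ k / (1 - r ^ (2 * k))) ≤ Real.exp ((1 - r)⁻¹ ^ 2) := by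
  have hr : 0 < 1 - r := sub_pos.2 h1
  refine (Real.prod_one_add_le_exp_sum _ fun k =>
    pow_div_one_sub_pow_nonneg h0 h1.le k (2 * k)).trans ?_
  rw [Real.exp_le_exp]
  calc ∑ k ∈ Icc 1 n, r ^ k / (1 - r ^ (2 * k))
      ≤ ∑ k ∈ Icc 1 n, r ^ k / (1 - r) := by
        refine sum_le_sum fun k hk => div_le_div_of_nonneg_left (pow_nonneg h0 k) hr ?_
        have : r ^ (2 * k) ≤ r := pow_le_of_le_one h0 h1.le (by have := (mem_Icc.1 hk).1; omega)
        linarith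
    _ ≤ (∑' k : ℕ, r ^ k) / (1 - r) := by
        rw [← sum_div]
        gcongr
        exact (summable_geometric_of_lt_one h0 h1).sum_le_tsum _ fun k _ => pow_nonneg h0 k
    _ = (1 - r)⁻¹ ^ 2 := by rw [tsum_geometric_of_lt_one h0 h1]; ring

theorem summable_pow_size {r : ℝ} (h0 : 0 ≤ r) (h1 : r < 1) :
    Summable fun b : Profile => r ^ b.size := by
  have hr : ‖r‖ < 1 := by rwa [Real.norm_of_nonneg h0]
  have hfiber (n : ℕ) : ∑' d : ℕ × (Fin n → ZeroOrOdd), r ^ Profile.size ⟨n, d⟩ ≤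
      Real.exp ((1 - r)⁻¹ ^ 2) / (1 - r) * r ^ (n + 1) := by
    have hlargest : r ^ (n + 1) / (1 - r ^ (n + 1)) ≤ r ^ (n + 1) / (1 - r) :=
      div_le_div_of_nonneg_left (pow_nonneg h0 _) (sub_pos.2 h1)
        (by linarith [pow_le_of_le_one h0 h1.le n.add_one_ne_zero])
    rw [(hasSum_pow_size_fiber hr n).tsum_eq]
    calc _ ≤ r ^ (n + 1) / (1 - r) * Real.exp ((1 - r)⁻¹ ^ 2) :=
          mul_le_mul hlargest (prod_one_add_pow_div_le h0 h1 n)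
            (prod_nonneg fun k _ =>
              add_nonneg zero_le_one (pow_div_one_sub_pow_nonneg h0 h1.le k (2 * k)))
            (by positivity)
      _ = _ := by ring
  refine (summable_sigma_of_nonneg fun b => pow_nonneg h0 _).2
    ⟨fun n => (hasSum_pow_size_fiber hr n).summable, ?_⟩
  exact .of_nonneg_of_le (fun n => tsum_nonneg fun d => pow_nonneg h0 _) hfiber
    (((summable_geometric_of_lt_one h0 h1).mul_left
      (Real.exp ((1 - r)⁻¹ ^ 2) / (1 - r) * r)).congr fun n => by ring)

abbrev OddMultPartition : Type :=
  Σ m : ℕ, {p : (m + 1).Partition // OddMultExceptLargest p}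

theorem OddMultPartition.ext {a b : OddMultPartition} (h : a.2.1.parts = b.2.1.parts) :
    a = b := by
  obtain ⟨m, p, hp⟩ := a
  obtain ⟨m', p', hp'⟩ := b
  obtain rfl : m = m' := by simpa [p.parts_sum, p'.parts_sum] using congrArg Multiset.sum h
  obtain rfl : p = p' := Nat.Partition.ext h
  rfl

namespace Profile

def parts (b : Profile) : Multiset ℕ :=
  Multiset.replicate (b.2.1 + 1) (b.1 + 1) + ∑ i, Multiset.replicate (b.2.2 i) ((i : ℕ) + 1)

theorem mem_parts {b : Profile} {a : ℕ} (ha : a ∈ b.parts) : 0 < a ∧ a ≤ b.1 + 1 := by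
  simp only [parts, Multiset.mem_add, Multiset.mem_sum, Multiset.mem_replicate, mem_univ,
    true_and] at ha
  rcases ha with ⟨_, rfl⟩ | ⟨i, _, rfl⟩ <;> omega

theorem count_parts_largest (b : Profile) : b.parts.count (b.1 + 1) = b.2.1 + 1 := by
  simp only [parts, Multiset.count_add, Multiset.count_sum', Multiset.count_replicate]
  rw [if_pos trivial, sum_eq_zero fun i _ => if_neg (by omega), add_zero]

theorem count_parts_succ (b : Profile) (i : Fin b.1) :
    b.parts.count ((i : ℕ) + 1) = b.2.2 i := by
  simp only [parts, Multiset.count_add, Multiset.count_sum', Multiset.count_replicate]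
  rw [if_neg (by omega), zero_add, sum_eq_single i (fun k _ hki => if_neg fun h => hki (by omega))
    (by simp), if_pos rfl]

theorem largest_mem_parts (b : Profile) : b.1 + 1 ∈ b.parts :=
  Multiset.count_pos.1 (by rw [count_parts_largest]; omega)

theorem sum_parts (b : Profile) : b.parts.sum = b.size := by
  simp only [parts, size, weight, Multiset.sum_add, Multiset.sum_sum, Multiset.sum_replicate,
    smul_eq_mul, mul_comm]

theorem parts_injective : Function.Injective parts := by
  rintro ⟨n, j, f⟩ ⟨n', j', f'⟩ h
  obtain rfl : n = n' := by
    have h1 := mem_parts (b := ⟨n', j', f'⟩) (by rw [← h]; exact largest_mem_parts _)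
    have h2 := mem_parts (b := ⟨n, j, f⟩) (by rw [h]; exact largest_mem_parts _)
    simp only at h1 h2
    omega
  have hj := count_parts_largest ⟨n, j, f⟩
  rw [h, count_parts_largest ⟨n, j', f'⟩] at hj
  have hf (i : Fin n) : f i = f' i := by
    have := count_parts_succ ⟨n, j, f⟩ i
    rw [h] at this
    exact Subtype.ext (this.symm.trans (count_parts_succ ⟨n, j', f'⟩ i))
  simp only at hj
  rw [show j = j' by omega, funext hf]

theorem oddMultExceptLargest_parts (b : Profile) (a : ℕ) (ha : a ∈ b.parts)
    (hlt : ∃ c ∈ b.parts, a < c) : Odd (b.parts.count a) := by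
  obtain ⟨c, hc, hac⟩ := hlt
  obtain ⟨i, rfl⟩ : ∃ i : Fin b.1, a = i + 1 :=
    ⟨⟨a - 1, by have := mem_parts ha; have := mem_parts hc; omega⟩,
      (Nat.sub_add_cancel (mem_parts ha).1).symm⟩
  rw [← Multiset.count_pos, count_parts_succ] at ha
  rw [count_parts_succ]
  exact (b.2.2 i).2.resolve_left ha.ne'

theorem size_pos (b : Profile) : 0 < b.size := by
  unfold size; positivity

def toOddMultPartition (b : Profile) : OddMultPartition :=
  ⟨b.size - 1,
    ⟨b.parts, fun ha => (mem_parts ha).1, by rw [sum_parts, Nat.sub_add_cancel b.size_pos]⟩,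
    b.oddMultExceptLargest_parts⟩

theorem toOddMultPartition_injective : Function.Injective toOddMultPartition :=
  fun _ _ h => parts_injective (congrArg (fun a : OddMultPartition => a.2.1.parts) h)

theorem toOddMultPartition_surjective : Function.Surjective toOddMultPartition := by
  rintro ⟨m, p, hp⟩
  have hne : p.parts ≠ 0 := fun h => by simpa [h] using p.parts_sum
  obtain ⟨L, hL, hmax⟩ := Multiset.exists_max_image id hne
  obtain ⟨n, rfl⟩ : ∃ n, L = n + 1 := Nat.exists_eq_add_one.2 (p.parts_pos hL)
  have hsmall (i : Fin n) :
      p.parts.count ((i : ℕ) + 1) = 0 ∨ Odd (p.parts.count ((i : ℕ) + 1)) :=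
    or_iff_not_imp_left.2 fun h0 =>
      hp _ (Multiset.count_ne_zero.1 h0) ⟨n + 1, hL, by omega⟩
  refine ⟨⟨n, p.parts.count (n + 1) - 1, fun i => ⟨_, hsmall i⟩⟩,
    OddMultPartition.ext (Multiset.ext.2 fun a => ?_)⟩
  change (parts ⟨n, _, _⟩).count a = p.parts.count a
  by_cases ha : 0 < a ∧ a ≤ n
  · obtain ⟨i, rfl⟩ : ∃ i : Fin n, a = i + 1 :=
      ⟨⟨a - 1, by omega⟩, (Nat.sub_add_cancel ha.1).symm⟩
    exact count_parts_succ ⟨n, _, _⟩ i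
  obtain rfl | ha' := eq_or_ne a (n + 1)
  · exact (count_parts_largest _).trans (Nat.sub_add_cancel (Multiset.count_pos.2 hL))
  rw [Multiset.count_eq_zero.2 fun h => ?_, Multiset.count_eq_zero.2 fun h => ?_]
  · have := p.parts_pos h
    have := hmax a h
    simp only [id] at this
    omega
  · have := mem_parts h
    simp only at this
    omega

noncomputable def equivOddMultPartition : Profile ≃ OddMultPartition :=
  .ofBijective toOddMultPartition ⟨toOddMultPartition_injective, toOddMultPartition_surjective⟩

theorem fst_equivOddMultPartition_add_one (b : Profile) :
    (equivOddMultPartition b).1 + 1 = b.size :=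
  Nat.sub_add_cancel b.size_pos

end Profile

theorem hasSum_const_poStar (n : ℕ) (c : ℂ) :
    HasSum (fun _ : {p : n.Partition // OddMultExceptLargest p} => c) (poStar n * c) := by
  have h : Summable fun _ : {p : n.Partition // OddMultExceptLargest p} => c := .of_finite
  simpa [poStar, tsum_const, nsmul_eq_mul] using h.hasSum

theorem poStar_generating_function (q : ℂ) (hq : ‖q‖ < 1) :
    ∑' n : ℕ, (poStar (n + 1) : ℂ) * q ^ (n + 1) =
      ∑' n : ℕ, q ^ (n + 1) / (1 - q ^ (n + 1)) *
        ∏ k ∈ Finset.Icc 1 n, (1 + q ^ k / (1 - q ^ (2 * k))) := by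
  obtain ⟨S, hS⟩ : Summable fun b : Profile => q ^ b.size :=
    .of_norm (by simpa only [norm_pow] using summable_pow_size (norm_nonneg q) hq)
  have hpartitions : HasSum (fun a : OddMultPartition => q ^ (a.1 + 1)) S := by
    rw [← Profile.equivOddMultPartition.hasSum_iff]
    simpa only [Function.comp_def, Profile.fst_equivOddMultPartition_add_one] using hS
  rw [(hpartitions.sigma fun m => hasSum_const_poStar (m + 1) (q ^ (m + 1))).tsum_eq,
    (hS.sigma fun n => hasSum_pow_size_fiber hq n).tsum_eq]
end
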